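/- arXiv:1611.05901 — 6 statements merged into one kernel-verified Lean document; each statement's English description precedes it below -/
import Mathlib

section
/- If a sequence (a_n) of complex numbers satisfies a nonzero linear recurrence with polynomial coefficients over a field E that is a finite (algebraic) extension of a subfield F of the complex numbers, then (a_n) also satisfies a nonzero linear recurrence with polynomial coefficients over F. -/
open Filter Topology Polynomial

/-- A sequence is P-recursive over a subfield `F` of `ℂ`: it satisfies a nonzero
linear recurrence with polynomial coefficients whose coefficients lie in `F`. -/
def IsPRecursiveOver (F : Subfield ℂ) (a : ℕ → ℂ) : Prop :=
  ∃ r : ℕ, ∃ p : Fin (r + 1) → Polynomial ℂ,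
    (∀ j, ∀ k, (p j).coeff k ∈ F) ∧ p (Fin.last r) ≠ 0 ∧
    ∀ n : ℕ, ∑ j : Fin (r + 1), (p j).eval (n : ℂ) * a (n + (j : ℕ)) = 0

set_option maxHeartbeats 1000000
set_option synthInstance.maxHeartbeats 1000000

noncomputable section PRecAux

/-- Germs of complex sequences at infinity. -/
abbrev GG := Filter.Germ (Filter.atTop : Filter ℕ) ℂ

/-- evaluation of a complex polynomial along `ℕ`, as a germ -/
def evHom : Polynomial ℂ →+* GG where
  toFun P := ((fun n : ℕ => P.eval (n : ℂ)) : ℕ → ℂ)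
  map_one' := by simp [Filter.Germ.coe_one]; rfl
  map_mul' P Q := by
    show (((fun n : ℕ => (P*Q).eval (n:ℂ)) : ℕ → ℂ) : GG) =
      (((fun n : ℕ => P.eval (n:ℂ)) : ℕ → ℂ) : GG) * (((fun n : ℕ => Q.eval (n:ℂ)) : ℕ → ℂ) : GG)
    rw [← Filter.Germ.coe_mul]; congr 1; funext n; simp [Pi.mul_apply]
  map_zero' := by simp [Filter.Germ.coe_zero]; rfl
  map_add' P Q := by
    show (((fun n : ℕ => (P+Q).eval (n:ℂ)) : ℕ → ℂ) : GG) =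
      (((fun n : ℕ => P.eval (n:ℂ)) : ℕ → ℂ) : GG) + (((fun n : ℕ => Q.eval (n:ℂ)) : ℕ → ℂ) : GG)
    rw [← Filter.Germ.coe_add]; congr 1; funext n; simp [Pi.add_apply]

lemma evHom_apply (P : Polynomial ℂ) : evHom P = ((fun n : ℕ => P.eval (n : ℂ)) : ℕ → ℂ) := rfl

/-- constant germs -/
def cg : ℂ →+* GG := evHom.comp Polynomial.C

lemma cg_apply (x : ℂ) : cg x = ((fun _ : ℕ => x) : ℕ → ℂ) := by
  show evHom (Polynomial.C x) = _
  rw [evHom_apply]; congr 1; funext n; simp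

lemma germ_mul (f g : ℕ → ℂ) :
    (((fun n => f n * g n) : ℕ → ℂ) : GG) = ((f : ℕ → ℂ) : GG) * ((g : ℕ → ℂ) : GG) :=
  Filter.Germ.coe_mul f g

lemma germ_sum {ι : Type*} (s : Finset ι) (f : ι → ℕ → ℂ) :
    (((fun n => ∑ i ∈ s, f i n) : ℕ → ℂ) : GG) = ∑ i ∈ s, ((f i : ℕ → ℂ) : GG) := by
  have h : ((fun n => ∑ i ∈ s, f i n) : ℕ → ℂ) = ∑ i ∈ s, f i := by
    funext n; simp
  rw [h]
  exact map_sum (Filter.Germ.coeRingHom Filter.atTop) f s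

lemma isUnit_germ (f : ℕ → ℂ) (h : ∀ᶠ n in atTop, f n ≠ 0) : IsUnit ((f : ℕ → ℂ) : GG) := by
  refine isUnit_iff_exists_inv.mpr ⟨(((fun n => (f n)⁻¹) : ℕ → ℂ) : GG), ?_⟩
  rw [← Filter.Germ.coe_mul, ← Filter.Germ.coe_one, Filter.Germ.coe_eq]
  filter_upwards [h] with n hn
  exact mul_inv_cancel₀ hn

lemma eventually_eval_shift_ne (P : Polynomial ℂ) (hP : P ≠ 0) (c : ℂ) :
    ∀ᶠ n : ℕ in atTop, P.eval ((n : ℂ) + c) ≠ 0 := by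
  have hfin : Set.Finite {x : ℂ | P.IsRoot x} := Polynomial.finite_setOf_isRoot hP
  have hinj : Function.Injective (fun n : ℕ => (n : ℂ) + c) := by
    intro m n hmn
    simp only [add_left_inj] at hmn
    exact_mod_cast hmn
  have hfin2 : Set.Finite ((fun n : ℕ => (n : ℂ) + c) ⁻¹' {x : ℂ | P.IsRoot x}) :=
    Set.Finite.preimage hinj.injOn hfin
  rw [← Nat.cofinite_eq_atTop]
  exact Filter.mem_of_superset hfin2.compl_mem_cofinite (fun n hn => hn)

lemma isUnit_evShift (P : Polynomial ℂ) (hP : P ≠ 0) (c : ℂ) :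
    IsUnit ((((fun n : ℕ => P.eval ((n : ℂ) + c)) : ℕ → ℂ)) : GG) :=
  isUnit_germ _ (eventually_eval_shift_ne P hP c)

lemma germ_eq_zero_iff (f : ℕ → ℂ) : ((f : ℕ → ℂ) : GG) = 0 ↔ ∀ᶠ n in atTop, f n = 0 := by
  rw [← Filter.Germ.coe_zero, Filter.Germ.coe_eq]; rfl

section F
variable (F : Subfield ℂ)

/-- evaluation of an `F`-polynomial -/
def psiF : Polynomial ↥F →+* GG := evHom.comp (Polynomial.mapRingHom F.subtype)

lemma psiF_apply (q : Polynomial ↥F) :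
    psiF F q = ((fun n : ℕ => (q.map F.subtype).eval (n : ℂ) : ℕ → ℂ)) := rfl

lemma psiF_isUnit (q : Polynomial ↥F) (hq : q ≠ 0) : IsUnit (psiF F q) := by
  have h0 : q.map F.subtype ≠ 0 := by
    simpa using (Polynomial.map_injective F.subtype F.subtype_injective).ne hq
  have h := isUnit_evShift (q.map F.subtype) h0 0
  rw [psiF_apply]
  convert h using 2
  funext n; simp

/-- the embedding of `F(x)` into germs -/
def phiF : RatFunc ↥F →+* GG :=
  IsLocalization.lift (M := nonZeroDivisors (Polynomial ↥F)) (S := RatFunc ↥F)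
    (g := psiF F) (fun y => psiF_isUnit F y.1 (nonZeroDivisors.ne_zero y.2))

lemma phiF_algebraMap (q : Polynomial ↥F) :
    phiF F (algebraMap (Polynomial ↥F) (RatFunc ↥F) q) = psiF F q :=
  IsLocalization.lift_eq _ q

local instance instAGG : Algebra (RatFunc ↥F) GG := (phiF F).toAlgebra

lemma smulGG (f : RatFunc ↥F) (g : GG) : f • g = phiF F f * g := rfl

lemma phiF_C (c : ↥F) : phiF F (algebraMap ↥F (RatFunc ↥F) c) = cg (c : ℂ) := by
  rw [RatFunc.algebraMap_eq_C, ← RatFunc.algebraMap_C, phiF_algebraMap]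
  show evHom ((Polynomial.C c).map F.subtype) = evHom (Polynomial.C (c : ℂ))
  rw [Polynomial.map_C]
  rfl

section K
variable (K : IntermediateField ↥F ℂ) [FiniteDimensional ↥F ↥K]

/-- span of constant germs of a basis of `K` over the field `F(x)` of rational germs -/
def Aspan : Submodule (RatFunc ↥F) GG :=
  Submodule.span (RatFunc ↥F)
    (Set.range (fun i : Fin (Module.finrank ↥F ↥K) =>
      cg ((Module.finBasis ↥F ↥K i : ↥K) : ℂ)))

lemma gen_mem_Aspan (i : Fin (Module.finrank ↥F ↥K)) :
    cg ((Module.finBasis ↥F ↥K i : ↥K) : ℂ) ∈ Aspan F K :=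
  Submodule.subset_span ⟨i, rfl⟩

lemma constK_mem (x : ℂ) (hx : x ∈ K) : cg x ∈ Aspan F K := by
  classical
  set e := Module.finBasis ↥F ↥K with he
  have h1 : x = ∑ i, ((e.repr ⟨x, hx⟩ i : ℂ) * ((e i : ↥K) : ℂ)) := by
    calc x = algebraMap ↥K ℂ ⟨x, hx⟩ := rfl
    _ = algebraMap ↥K ℂ (∑ i, e.repr ⟨x, hx⟩ i • e i) := by rw [e.sum_repr]
    _ = ∑ i, algebraMap ↥K ℂ (e.repr ⟨x, hx⟩ i • e i) := map_sum _ _ _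
    _ = ∑ i, ((e.repr ⟨x, hx⟩ i : ℂ) * ((e i : ↥K) : ℂ)) := by
        refine Finset.sum_congr rfl fun i _ => ?_
        show ((e.repr ⟨x, hx⟩ i • e i : ↥K) : ℂ) = _
        rw [IntermediateField.coe_smul]
        rfl
  have h2 : cg x = ∑ i, (algebraMap ↥F (RatFunc ↥F) (e.repr ⟨x, hx⟩ i)) • cg ((e i : ↥K) : ℂ) := by
    conv_lhs => rw [h1]
    rw [map_sum]
    refine Finset.sum_congr rfl fun i _ => ?_
    rw [map_mul, smulGG, phiF_C]
  rw [h2]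
  exact Submodule.sum_mem _ fun i _ => Submodule.smul_mem _ _ (gen_mem_Aspan F K i)

lemma psiF_shift (m : ℕ) (i : ℕ) :
    psiF F ((X + Polynomial.C (m : ↥F))^i)
      = ((((fun n : ℕ => ((n:ℂ) + (m:ℂ))^i) : ℕ → ℂ)) : GG) := by
  have h4 : psiF F (X + Polynomial.C (m : ↥F)) = ((((fun n : ℕ => (n:ℂ) + (m:ℂ)) : ℕ → ℂ)) : GG) := by
    rw [psiF_apply, Polynomial.map_add, Polynomial.map_X, Polynomial.map_C]
    congr 1; funext n
    simp [map_natCast F.subtype m]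
  rw [map_pow, h4, ← Filter.Germ.coe_pow]
  rfl

lemma polyShift_mem (P : Polynomial ℂ) (hP : ∀ k, P.coeff k ∈ K) (m : ℕ) :
    ((((fun n : ℕ => P.eval ((n:ℂ) + (m:ℂ))) : ℕ → ℂ)) : GG) ∈ Aspan F K := by
  have h1 : ((fun n : ℕ => P.eval ((n:ℂ) + (m:ℂ))) : ℕ → ℂ)
      = fun n : ℕ => ∑ i ∈ Finset.range (P.natDegree + 1), P.coeff i * ((n:ℂ)+(m:ℂ))^i := by
    funext n; exact P.eval_eq_sum_range _
  rw [h1, germ_sum]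
  refine Submodule.sum_mem _ fun i _ => ?_
  have h2 : ((((fun n : ℕ => P.coeff i * ((n:ℂ)+(m:ℂ))^i) : ℕ → ℂ)) : GG)
      = (algebraMap (Polynomial ↥F) (RatFunc ↥F) ((X + Polynomial.C (m : ↥F))^i)) • cg (P.coeff i) := by
    rw [smulGG, phiF_algebraMap, psiF_shift, cg_apply, ← germ_mul]
    congr 1; funext n; ring
  rw [h2]
  exact Submodule.smul_mem _ _ (constK_mem F K _ (hP i))

lemma A_mul_A {x y : GG} (hx : x ∈ Aspan F K) (hy : y ∈ Aspan F K) : x * y ∈ Aspan F K := by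
  induction hx using Submodule.span_induction with
  | mem x hxg =>
    obtain ⟨i, rfl⟩ := hxg
    induction hy using Submodule.span_induction with
    | mem y hyg =>
      obtain ⟨j, rfl⟩ := hyg
      rw [← map_mul]
      exact constK_mem F K _ (mul_mem (Module.finBasis ↥F ↥K i).2 (Module.finBasis ↥F ↥K j).2)
    | zero => rw [mul_zero]; exact zero_mem _
    | add y z _ _ hy hz => rw [mul_add]; exact add_mem hy hz
    | smul c y _ hy => rw [Algebra.mul_smul_comm]; exact Submodule.smul_mem _ _ hy
  | zero => rw [zero_mul]; exact zero_mem _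
  | add x z _ _ hx hz => rw [add_mul]; exact add_mem hx hz
  | smul c x _ hx => rw [Algebra.smul_mul_assoc]; exact Submodule.smul_mem _ _ hx

lemma one_mem_Aspan : (1 : GG) ∈ Aspan F K := by
  have : (1 : GG) = cg 1 := by rw [map_one]
  rw [this]
  exact constK_mem F K 1 (one_mem K)

lemma A_inv {x : GG} (hx : x ∈ Aspan F K) (hu : IsUnit x) : ∃ w ∈ Aspan F K, x * w = 1 := by
  haveI : FiniteDimensional (RatFunc ↥F) ↥(Aspan F K) :=
    FiniteDimensional.span_of_finite _ (Set.finite_range _)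
  have hmap : ∀ y ∈ Aspan F K, (LinearMap.mulLeft (RatFunc ↥F) x) y ∈ Aspan F K :=
    fun y hy => A_mul_A F K hx hy
  set T : ↥(Aspan F K) →ₗ[RatFunc ↥F] ↥(Aspan F K) :=
    (LinearMap.mulLeft (RatFunc ↥F) x).restrict hmap with hT
  have hinj : Function.Injective T := by
    intro y z hyz
    apply Subtype.ext
    have h2 : x * (y : GG) = x * (z : GG) := by
      have := congrArg Subtype.val hyz
      simpa [hT, LinearMap.restrict_apply] using this
    exact hu.mul_left_cancel h2
  obtain ⟨w, hw⟩ := LinearMap.surjective_of_injective hinj ⟨1, one_mem_Aspan F K⟩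
  refine ⟨w, w.2, ?_⟩
  have := congrArg Subtype.val hw
  simpa [hT, LinearMap.restrict_apply] using this

section M
variable (a : ℕ → ℂ) (r : ℕ)

/-- shifts of the sequence, as germs -/
def bg (k : ℕ) : GG := (((fun n => a (n + k)) : ℕ → ℂ) : GG)

lemma bg_def (k : ℕ) : bg a k = (((fun n => a (n + k)) : ℕ → ℂ) : GG) := rfl

/-- the module spanned by basis-constants times the first `r` shifts -/
def Mspan : Submodule (RatFunc ↥F) GG :=
  Submodule.span (RatFunc ↥F)
    (Set.range (fun q : Fin (Module.finrank ↥F ↥K) × Fin r =>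
      cg ((Module.finBasis ↥F ↥K q.1 : ↥K) : ℂ) * bg a (q.2 : ℕ)))

lemma A_mul_gen {y : GG} (hy : y ∈ Aspan F K) (j : Fin r) :
    y * bg a (j : ℕ) ∈ Mspan F K a r := by
  induction hy using Submodule.span_induction with
  | mem y hyg =>
    obtain ⟨i, rfl⟩ := hyg
    exact Submodule.subset_span ⟨(i, j), rfl⟩
  | zero => rw [zero_mul]; exact zero_mem _
  | add y z _ _ hy hz => rw [add_mul]; exact add_mem hy hz
  | smul c y _ hy => rw [Algebra.smul_mul_assoc]; exact Submodule.smul_mem _ _ hy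

lemma A_mul_M {x m : GG} (hx : x ∈ Aspan F K) (hm : m ∈ Mspan F K a r) :
    x * m ∈ Mspan F K a r := by
  induction hm using Submodule.span_induction with
  | mem m hmg =>
    obtain ⟨⟨i, j⟩, rfl⟩ := hmg
    rw [← mul_assoc]
    exact A_mul_gen F K a r (A_mul_A F K hx (gen_mem_Aspan F K i)) j
  | zero => rw [mul_zero]; exact zero_mem _
  | add y z _ _ hy hz => rw [mul_add]; exact add_mem hy hz
  | smul c y _ hy => rw [Algebra.mul_smul_comm]; exact Submodule.smul_mem _ _ hy

end M
end K
end F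
end PRecAux

theorem prec_descend_algebraic_ext (F E : Subfield ℂ) (hFE : F ≤ E)
    (halg : ∀ x ∈ E, IsAlgebraic F x) (a : ℕ → ℂ)
    (h : IsPRecursiveOver E a) : IsPRecursiveOver F a := by
  classical
  letI : Algebra (RatFunc ↥F) GG := instAGG F
  obtain ⟨r, p, hcoeff, hlast, hrec⟩ := h
  -- the set of coefficients generates a finite extension K of F
  set S : Set ℂ := ⋃ j : Fin (r+1), Set.range ((p j).coeff) with hS
  have hSfin : S.Finite := by
    refine Set.finite_iUnion fun j => ?_
    have hsub : Set.range ((p j).coeff) ⊆ insert 0 ((p j).coeff '' ↑(p j).support) := by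
      rintro x ⟨k, rfl⟩
      by_cases hk : (p j).coeff k = 0
      · simp [hk]
      · exact Set.mem_insert_of_mem _ ⟨k, by simpa [Polynomial.mem_support_iff] using hk, rfl⟩
    exact (((p j).support.finite_toSet.image _).insert 0).subset hsub
  set K : IntermediateField ↥F ℂ := IntermediateField.adjoin ↥F S with hK
  haveI hKfd : FiniteDimensional ↥F ↥K := by
    haveI : Finite ↑S := hSfin
    refine IntermediateField.finiteDimensional_adjoin (fun x hx => ?_)
    simp only [hS, Set.mem_iUnion, Set.mem_range] at hx
    obtain ⟨j, k, rfl⟩ := hx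
    exact (halg _ (hcoeff j k)).isIntegral
  have hPK : ∀ (j : Fin (r+1)) (k : ℕ), (p j).coeff k ∈ K :=
    fun j k => IntermediateField.subset_adjoin ↥F S (Set.mem_iUnion.mpr ⟨j, ⟨k, rfl⟩⟩)
  set d : ℕ := Module.finrank ↥F ↥K with hd
  set N : ℕ := d * r with hN
  -- extend p to a function on ℕ
  set pp : ℕ → Polynomial ℂ := fun t => if ht : t < r+1 then p ⟨t, ht⟩ else 0 with hpp
  have hppK : ∀ (t : ℕ) (k : ℕ), (pp t).coeff k ∈ K := by
    intro t k
    by_cases ht : t < r+1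
    · simp only [hpp, dif_pos ht]; exact hPK _ k
    · simp only [hpp, dif_neg ht, Polynomial.coeff_zero]; exact zero_mem _
  have hrec' : ∀ m n : ℕ,
      ∑ j ∈ Finset.range (r+1), (pp j).eval ((n:ℂ)+(m:ℂ)) * a (n + (m + j)) = 0 := by
    intro m n
    have h0 := hrec (n + m)
    rw [← Fin.sum_univ_eq_sum_range (fun j => (pp j).eval ((n:ℂ)+(m:ℂ)) * a (n + (m + j))) (r+1)]
    refine Eq.trans (Finset.sum_congr rfl fun j _ => ?_) h0
    have hpj : pp (j:ℕ) = p j := by simp only [hpp, dif_pos j.isLt, Fin.eta]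
    rw [hpj, ← Nat.add_assoc]
    push_cast
    ring_nf
  -- the germ form of the shifted recurrences
  have hgerm : ∀ m : ℕ,
      ∑ j ∈ Finset.range (r+1),
        ((((fun n : ℕ => (pp j).eval ((n:ℂ)+(m:ℂ))) : ℕ → ℂ)) : GG) * bg a (m + j) = 0 := by
    intro m
    have h1 : ∀ j : ℕ, ((((fun n : ℕ => (pp j).eval ((n:ℂ)+(m:ℂ))) : ℕ → ℂ)) : GG) * bg a (m+j)
        = ((((fun n : ℕ => (pp j).eval ((n:ℂ)+(m:ℂ)) * a (n + (m+j))) : ℕ → ℂ)) : GG) := by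
      intro j; rw [bg_def, ← germ_mul]
    calc ∑ j ∈ Finset.range (r+1),
          ((((fun n : ℕ => (pp j).eval ((n:ℂ)+(m:ℂ))) : ℕ → ℂ)) : GG) * bg a (m + j)
        = ∑ j ∈ Finset.range (r+1),
          ((((fun n : ℕ => (pp j).eval ((n:ℂ)+(m:ℂ)) * a (n + (m+j))) : ℕ → ℂ)) : GG) :=
        Finset.sum_congr rfl fun j _ => h1 j
      _ = ((((fun n : ℕ => ∑ j ∈ Finset.range (r+1), (pp j).eval ((n:ℂ)+(m:ℂ)) * a (n + (m+j))) : ℕ → ℂ)) : GG) :=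
        (germ_sum _ _).symm
      _ = 0 := by
        apply (germ_eq_zero_iff _).mpr
        filter_upwards with n using hrec' m n
  -- all shifts of the sequence lie in Mspan
  have bmem : ∀ k : ℕ, bg a k ∈ Mspan F K a r := by
    intro k
    induction k using Nat.strong_induction_on with
    | _ k IH =>
    by_cases hk : k < r
    · have h2 := A_mul_gen F K a r (one_mem_Aspan F K) ⟨k, hk⟩
      simpa using h2
    · set m := k - r with hm
      have hkm : k = m + r := by omega
      have hg := hgerm m
      rw [Finset.sum_range_succ] at hg
      set u : GG := ((((fun n : ℕ => (pp r).eval ((n:ℂ)+(m:ℂ))) : ℕ → ℂ)) : GG) with hu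
      have hppr : pp r = p (Fin.last r) := by
        simp only [hpp, dif_pos (Nat.lt_succ_self r)]
        rfl
      have huu : IsUnit u := by
        rw [hu]
        exact isUnit_evShift _ (by rw [hppr]; exact hlast) _
      have huA : u ∈ Aspan F K := polyShift_mem F K _ (hppK r) m
      obtain ⟨w, hwA, hw1⟩ := A_inv F K huA huu
      have hsum : ∑ j ∈ Finset.range r,
          ((((fun n : ℕ => (pp j).eval ((n:ℂ)+(m:ℂ))) : ℕ → ℂ)) : GG) * bg a (m+j)
          ∈ Mspan F K a r := by
        refine Submodule.sum_mem _ fun j hj => ?_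
        exact A_mul_M F K a r (polyShift_mem F K _ (hppK j) m)
          (IH (m+j) (by rw [hkm]; exact Nat.add_lt_add_left (Finset.mem_range.mp hj) m))
      have hval : u * bg a (m+r) = -∑ j ∈ Finset.range r,
          ((((fun n : ℕ => (pp j).eval ((n:ℂ)+(m:ℂ))) : ℕ → ℂ)) : GG) * bg a (m+j) :=
        eq_neg_of_add_eq_zero_right hg
      have hbg : bg a k = w * (u * bg a (m+r)) := by
        rw [hkm]
        calc bg a (m+r) = 1 * bg a (m+r) := (one_mul _).symm
        _ = (u * w) * bg a (m+r) := by rw [hw1]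
        _ = w * (u * bg a (m+r)) := by ring
      rw [hbg, hval]
      exact A_mul_M F K a r hwA (neg_mem hsum)
  -- linear dependence over F(x)
  haveI : FiniteDimensional (RatFunc ↥F) ↥(Mspan F K a r) :=
    FiniteDimensional.span_of_finite _ (Set.finite_range _)
  have hnotLI : ¬ LinearIndependent (RatFunc ↥F)
      (fun i : Fin (N+1) => (⟨bg a (i:ℕ), bmem (i:ℕ)⟩ : ↥(Mspan F K a r))) := by
    intro hLI
    have h1 := hLI.fintype_card_le_finrank
    have h2 : Module.finrank (RatFunc ↥F) ↥(Mspan F K a r) ≤ N := by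
      haveI := (Set.finite_range (fun q : Fin d × Fin r =>
        cg ((Module.finBasis ↥F ↥K q.1 : ↥K) : ℂ) * bg a (q.2 : ℕ))).fintype
      have h3 := finrank_span_le_card (R := RatFunc ↥F) (Set.range (fun q : Fin d × Fin r =>
        cg ((Module.finBasis ↥F ↥K q.1 : ↥K) : ℂ) * bg a (q.2 : ℕ)))
      have h4 : (Set.range (fun q : Fin d × Fin r =>
          cg ((Module.finBasis ↥F ↥K q.1 : ↥K) : ℂ) * bg a (q.2 : ℕ))).toFinset.card ≤ N := by
        rw [Set.toFinset_range]
        calc (Finset.univ.image _).card ≤ (Finset.univ : Finset (Fin d × Fin r)).card :=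
          Finset.card_image_le
        _ = N := by simp [hN]
      exact le_trans h3 h4
    rw [Fintype.card_fin] at h1
    omega
  obtain ⟨g, hgsum, i0, hgi0⟩ := Fintype.not_linearIndependent_iff.mp hnotLI
  have hgsum' : ∑ i : Fin (N+1), g i • bg a (i:ℕ) = 0 := by
    have h5 := congrArg (Submodule.subtype (Mspan F K a r)) hgsum
    simpa [map_sum] using h5
  -- clear denominators
  set PF : Fin (N+1) → Polynomial ↥F :=
    fun i => (g i).num * ∏ i' ∈ Finset.univ.erase i, (g i').denom with hPF
  set D : Polynomial ↥F := ∏ i, (g i).denom with hD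
  have hDfact : ∀ i, psiF F (PF i) = phiF F (g i) * psiF F D := by
    intro i
    rw [← phiF_algebraMap, ← phiF_algebraMap]
    have hne : algebraMap (Polynomial ↥F) (RatFunc ↥F) (g i).denom ≠ 0 :=
      RatFunc.algebraMap_ne_zero (RatFunc.denom_ne_zero _)
    have hmain : (algebraMap (Polynomial ↥F) (RatFunc ↥F)) (g i).num
        = g i * algebraMap (Polynomial ↥F) (RatFunc ↥F) (g i).denom :=
      (div_eq_iff hne).mp (RatFunc.num_div_denom (g i))
    rw [← map_mul]
    congr 1
    calc algebraMap (Polynomial ↥F) (RatFunc ↥F) (PF i)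
        = algebraMap (Polynomial ↥F) (RatFunc ↥F) (g i).num
          * algebraMap (Polynomial ↥F) (RatFunc ↥F) (∏ i' ∈ Finset.univ.erase i, (g i').denom) := by
          rw [hPF]; exact map_mul _ _ _
      _ = g i * (algebraMap (Polynomial ↥F) (RatFunc ↥F) (g i).denom
          * algebraMap (Polynomial ↥F) (RatFunc ↥F) (∏ i' ∈ Finset.univ.erase i, (g i').denom)) := by
          rw [hmain]; ring
      _ = g i * algebraMap (Polynomial ↥F) (RatFunc ↥F) D := by
          rw [← map_mul]
          congr 2
          rw [hD]
          exact Finset.mul_prod_erase Finset.univ (fun i' => (g i').denom) (Finset.mem_univ i)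
  have hDg : ∑ i : Fin (N+1), psiF F (PF i) * bg a (i:ℕ) = 0 := by
    calc ∑ i : Fin (N+1), psiF F (PF i) * bg a (i:ℕ)
        = psiF F D * ∑ i : Fin (N+1), g i • bg a (i:ℕ) := by
          rw [Finset.mul_sum]
          refine Finset.sum_congr rfl fun i _ => ?_
          rw [hDfact i, smulGG]; ring
      _ = 0 := by rw [hgsum', mul_zero]
  -- extend PF to ℕ
  set PFF : ℕ → Polynomial ↥F := fun t => if ht : t < N+1 then PF ⟨t, ht⟩ else 0 with hPFF
  have hDg2 : ((((fun n : ℕ => ∑ t ∈ Finset.range (N+1),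
      ((PFF t).map F.subtype).eval (n:ℂ) * a (n + t)) : ℕ → ℂ)) : GG) = 0 := by
    rw [germ_sum,
      ← Fin.sum_univ_eq_sum_range (fun t => ((((fun n : ℕ =>
        ((PFF t).map F.subtype).eval (n:ℂ) * a (n+t)) : ℕ → ℂ)) : GG)) (N+1), ← hDg]
    refine Finset.sum_congr rfl fun i _ => ?_
    have hPFFi : PFF (i:ℕ) = PF i := by simp only [hPFF, dif_pos i.isLt, Fin.eta]
    rw [hPFFi, psiF_apply, bg_def, ← germ_mul]
  obtain ⟨N0, hN0⟩ := Filter.eventually_atTop.mp ((germ_eq_zero_iff _).mp hDg2)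
  -- the largest index with a nonzero coefficient
  set sf : Finset (Fin (N+1)) := Finset.univ.filter (fun i => PF i ≠ 0) with hsf
  have hPFne : PF i0 ≠ 0 := by
    rw [hPF]
    refine mul_ne_zero (RatFunc.num_ne_zero hgi0) ?_
    rw [Finset.prod_ne_zero_iff]
    exact fun i' _ => RatFunc.denom_ne_zero _
  have hsne : sf.Nonempty := ⟨i0, by simp [hsf, hPFne]⟩
  set i1 : Fin (N+1) := sf.max' hsne with hi1
  have hi1ne : PF i1 ≠ 0 := by
    have h6 := sf.max'_mem hsne
    simp only [hsf, Finset.mem_filter] at h6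
    exact h6.2
  have hgt : ∀ i : Fin (N+1), i1 < i → PF i = 0 := by
    intro i hi
    by_contra hne
    exact absurd (Finset.le_max' sf i (by simp [hsf, hne])) (not_le.mpr hi)
  -- assemble the recurrence over F
  set Qf : Polynomial ↥F := ∏ t ∈ Finset.range N0, (X - Polynomial.C (t : ↥F)) with hQf
  have hQfne : Qf ≠ 0 := by
    rw [hQf, Finset.prod_ne_zero_iff]
    exact fun t _ => Polynomial.X_sub_C_ne_zero _
  refine ⟨(i1 : ℕ), fun j => (Qf * PFF (j : ℕ)).map F.subtype, ?_, ?_, ?_⟩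
  · intro j k
    rw [Polynomial.coeff_map]
    exact SetLike.coe_mem _
  · show (Qf * PFF ((Fin.last (i1:ℕ) : Fin ((i1:ℕ)+1)) : ℕ)).map F.subtype ≠ 0
    rw [Fin.val_last]
    have hPFFi1 : PFF (i1:ℕ) = PF i1 := by simp only [hPFF, dif_pos i1.isLt, Fin.eta]
    rw [hPFFi1]
    intro hzero
    have := Polynomial.map_injective F.subtype F.subtype_injective
      (by simpa using hzero : (Qf * PF i1).map F.subtype = (0 : Polynomial ↥F).map F.subtype)
    exact (mul_ne_zero hQfne hi1ne) this
  · intro n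
    show ∑ j : Fin ((i1:ℕ)+1), ((Qf * PFF (j:ℕ)).map F.subtype).eval (n:ℂ) * a (n + (j:ℕ)) = 0
    rw [Fin.sum_univ_eq_sum_range
      (fun t => (((Qf * PFF t).map F.subtype).eval (n:ℂ)) * a (n + t)) ((i1:ℕ)+1)]
    have hsplit : ∀ t : ℕ, ((Qf * PFF t).map F.subtype).eval (n:ℂ)
        = (Qf.map F.subtype).eval (n:ℂ) * ((PFF t).map F.subtype).eval (n:ℂ) := by
      intro t; rw [Polynomial.map_mul, Polynomial.eval_mul]
    by_cases hn : n < N0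
    · have hq0 : (Qf.map F.subtype).eval (n:ℂ) = 0 := by
        rw [hQf, Polynomial.map_prod, Polynomial.eval_prod]
        refine Finset.prod_eq_zero (Finset.mem_range.mpr hn) ?_
        simp [map_natCast F.subtype]
      refine Finset.sum_eq_zero fun t _ => ?_
      rw [hsplit, hq0, zero_mul, zero_mul]
    · have hext : ∑ t ∈ Finset.range ((i1:ℕ)+1), ((PFF t).map F.subtype).eval (n:ℂ) * a (n+t)
          = ∑ t ∈ Finset.range (N+1), ((PFF t).map F.subtype).eval (n:ℂ) * a (n+t) := by
        refine Finset.sum_subset (Finset.range_subset_range.mpr (by omega : (i1:ℕ)+1 ≤ N+1)) ?_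
        intro t ht hnt
        have ht' : t < N+1 := Finset.mem_range.mp ht
        have hti : (i1:ℕ) < t := by
          simp only [Finset.mem_range] at hnt
          omega
        have hPFt : PF ⟨t, ht'⟩ = 0 := hgt ⟨t, ht'⟩ (by rw [Fin.lt_def]; exact hti)
        simp [hPFF, dif_pos ht', hPFt]
      calc ∑ t ∈ Finset.range ((i1:ℕ)+1), ((Qf * PFF t).map F.subtype).eval (n:ℂ) * a (n + t)
          = (Qf.map F.subtype).eval (n:ℂ)
            * ∑ t ∈ Finset.range ((i1:ℕ)+1), ((PFF t).map F.subtype).eval (n:ℂ) * a (n+t) := by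
            rw [Finset.mul_sum]
            exact Finset.sum_congr rfl fun t _ => by rw [hsplit]; ring
        _ = (Qf.map F.subtype).eval (n:ℂ) * 0 := by
            rw [hext, hN0 n (by omega)]
        _ = 0 := mul_zero _
end

section
/- If R is a subring of a subfield F of ℂ, and a sequence (a_n) with all terms in R satisfies a nonzero linear recurrence with polynomial coefficients over F, then (a_n) satisfies a nonzero linear recurrence with polynomial coefficients over the fraction field of R. -/
set_option synthInstance.maxHeartbeats 400000
set_option maxHeartbeats 1000000


open Filter Topology Polynomial

lemma core_descend {ι : Type} [Fintype ι] [DecidableEq ι] (K : Subfield ℂ) (M : ℕ → ι → ℂ)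
    (hM : ∀ n i, M n i ∈ K) (c : ι → ℂ) (hc0 : c ≠ 0)
    (hsol : ∀ n, ∑ i, M n i * c i = 0) :
    ∃ c' : ι → ℂ, (∀ i, c' i ∈ K) ∧ c' ≠ 0 ∧ ∀ n, ∑ i, M n i * c' i = 0 := by
  set M' : ℕ → ι → K := fun n i => ⟨M n i, hM n i⟩ with hM'
  by_cases htop : Submodule.span K (Set.range M') = ⊤
  · exfalso
    have key : ∀ v : ι → K, ∑ i, (v i : ℂ) * c i = 0 := by
      intro v
      have hv : v ∈ Submodule.span K (Set.range M') := htop ▸ Submodule.mem_top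
      induction hv using Submodule.span_induction with
      | mem x hx =>
        obtain ⟨n, rfl⟩ := hx
        simpa using hsol n
      | zero => simp
      | add x y hx hy ihx ihy =>
        simp only [Pi.add_apply, Subfield.coe_add, add_mul, Finset.sum_add_distrib, ihx, ihy,
          add_zero]
      | smul k x hx ih =>
        have : ∑ i, ((k • x) i : ℂ) * c i = (k : ℂ) * ∑ i, (x i : ℂ) * c i := by
          rw [Finset.mul_sum]
          refine Finset.sum_congr rfl fun i _ => ?_
          simp [mul_assoc]
        rw [this, ih, mul_zero]
    apply hc0; funext i
    have := key (Pi.single i 1)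
    simp only [Pi.single_apply] at this
    rw [Finset.sum_eq_single i (fun b _ hb => by simp [hb]) (by simp)] at this
    simpa using this
  · obtain ⟨f, hf0, hf⟩ := Submodule.exists_dual_map_eq_bot_of_lt_top
      (lt_top_iff_ne_top.2 htop) inferInstance
    have hrow : ∀ n, f (M' n) = 0 := by
      intro n
      have : f (M' n) ∈ (Submodule.span K (Set.range M')).map f :=
        Submodule.mem_map_of_mem (Submodule.subset_span ⟨n, rfl⟩)
      rw [hf] at this
      simpa using this
    refine ⟨fun i => (f fun j => if i = j then 1 else 0 : K), fun i => (f _).2, ?_, ?_⟩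
    · intro hc'
      apply hf0
      have hz : ∀ i, f (fun j => if i = j then 1 else 0) = 0 := by
        intro i
        have := congrFun hc' i
        exact Subtype.ext (by simpa using this)
      refine LinearMap.ext fun v => ?_
      rw [LinearMap.pi_apply_eq_sum_univ]
      simp [hz]
    · intro n
      have h1 := hrow n
      rw [LinearMap.pi_apply_eq_sum_univ] at h1
      have h2 : (K.subtype (∑ i, M' n i • f fun j => if i = j then 1 else 0)) = 0 := by
        rw [h1]; simp
      rw [map_sum] at h2
      simp only [smul_eq_mul, map_mul] at h2
      simpa [hM'] using h2

theorem prec_descend_to_fraction_field (R : Subring ℂ) (F : Subfield ℂ)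
    (hRF : (R : Set ℂ) ⊆ (F : Set ℂ)) (K : Subfield ℂ)
    (hK : ∀ x : ℂ, x ∈ K ↔ ∃ p ∈ R, ∃ q ∈ R, q ≠ 0 ∧ x = p / q)
    (a : ℕ → ℂ) (ha : ∀ n, a n ∈ R)
    (h : IsPRecursiveOver F a) : IsPRecursiveOver K a := by
  obtain ⟨r, p, hpF, hplast, hrec⟩ := h
  have haK : ∀ n, a n ∈ K := fun n =>
    (hK (a n)).2 ⟨a n, ha n, 1, R.one_mem, one_ne_zero, (div_one _).symm⟩
  set d : ℕ := Finset.univ.sup fun j => (p j).natDegree with hd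
  have hdeg : ∀ j, (p j).natDegree < d + 1 := fun j =>
    Nat.lt_succ_of_le (hd ▸ Finset.le_sup (f := fun j => (p j).natDegree) (Finset.mem_univ j))
  set M : ℕ → (Fin (r + 1) × Fin (d + 1)) → ℂ :=
    fun n i => (n : ℂ) ^ (i.2 : ℕ) * a (n + (i.1 : ℕ)) with hM
  have hMK : ∀ n i, M n i ∈ K := fun n i =>
    K.mul_mem (K.pow_mem (natCast_mem K n) _) (haK _)
  set c : (Fin (r + 1) × Fin (d + 1)) → ℂ := fun i => (p i.1).coeff (i.2 : ℕ) with hc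
  have hc0 : c ≠ 0 := by
    intro hz
    apply hplast
    have hk : (p (Fin.last r)).natDegree < d + 1 := hdeg _
    have := congrFun hz (Fin.last r, ⟨(p (Fin.last r)).natDegree, hk⟩)
    simp only [hc, Pi.zero_apply] at this
    exact Polynomial.leadingCoeff_eq_zero.mp this
  have hsol : ∀ n, ∑ i, M n i * c i = 0 := by
    intro n
    rw [Fintype.sum_prod_type]
    have : ∀ j : Fin (r + 1),
        ∑ k : Fin (d + 1), M n (j, k) * c (j, k) = (p j).eval (n : ℂ) * a (n + (j : ℕ)) := by
      intro j
      rw [Polynomial.eval_eq_sum_range' (hdeg j), Finset.sum_mul,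
        ← Fin.sum_univ_eq_sum_range (fun k => (p j).coeff k * (n : ℂ) ^ k * a (n + (j : ℕ)))]
      refine Finset.sum_congr rfl fun k _ => ?_
      simp only [hM, hc]
      ring
    rw [Finset.sum_congr rfl fun j _ => this j]
    exact hrec n
  obtain ⟨c', hc'K, hc'0, hsol'⟩ := core_descend K M hMK c hc0 hsol
  -- build the polynomials
  set q : Fin (r + 1) → Polynomial ℂ :=
    fun j => ∑ k : Fin (d + 1), Polynomial.C (c' (j, k)) * Polynomial.X ^ (k : ℕ) with hq
  have hqcoeff : ∀ j (m : ℕ), (q j).coeff m = ∑ k : Fin (d + 1),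
      if m = (k : ℕ) then c' (j, k) else 0 := by
    intro j m
    rw [hq, Polynomial.finset_sum_coeff]
    refine Finset.sum_congr rfl fun k _ => ?_
    rw [Polynomial.coeff_C_mul, Polynomial.coeff_X_pow]
    split <;> simp
  have hqK : ∀ j m, (q j).coeff m ∈ K := by
    intro j m
    rw [hqcoeff]
    exact Subfield.sum_mem K fun k _ => by split <;> [exact hc'K _; exact K.zero_mem]
  have hqcoeff' : ∀ j (k : Fin (d + 1)), (q j).coeff (k : ℕ) = c' (j, k) := by
    intro j k
    rw [hqcoeff]
    rw [Finset.sum_eq_single k (fun b _ hb => by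
      rw [if_neg]; exact fun hh => hb (Fin.ext hh.symm)) (by simp)]
    simp
  have hqeval : ∀ j (x : ℂ), (q j).eval x = ∑ k : Fin (d + 1), c' (j, k) * x ^ (k : ℕ) := by
    intro j x
    simp [hq, Polynomial.eval_finset_sum]
  have hqex : ∃ j, q j ≠ 0 := by
    by_contra hz
    push_neg at hz
    apply hc'0
    funext i
    have := hqcoeff' i.1 i.2
    rw [hz i.1] at this
    simpa using this.symm
  -- recurrence for q
  have hqrec : ∀ n : ℕ, ∑ j : Fin (r + 1), (q j).eval (n : ℂ) * a (n + (j : ℕ)) = 0 := by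
    intro n
    have := hsol' n
    rw [Fintype.sum_prod_type] at this
    rw [← this]
    refine Finset.sum_congr rfl fun j _ => ?_
    rw [hqeval, Finset.sum_mul]
    refine Finset.sum_congr rfl fun k _ => ?_
    simp only [hM]
    ring
  -- take the largest j with q j ≠ 0
  classical
  set T : Finset (Fin (r + 1)) := Finset.univ.filter fun j => q j ≠ 0 with hT
  have hTne : T.Nonempty := by
    obtain ⟨j, hj⟩ := hqex
    exact ⟨j, by simp [hT, hj]⟩
  set j0 : Fin (r + 1) := T.max' hTne with hj0
  have hj0ne : q j0 ≠ 0 := by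
    have := T.max'_mem hTne
    simpa [hT] using this
  have hbig : ∀ j : Fin (r + 1), j0 < j → q j = 0 := by
    intro j hj
    by_contra hne
    exact absurd (T.le_max' j (by simp [hT, hne])) (not_le.mpr hj)
  have hle : (j0 : ℕ) + 1 ≤ r + 1 := Nat.succ_le_succ j0.is_le
  refine ⟨(j0 : ℕ), fun i => q (Fin.castLE hle i), fun i k => hqK _ _, ?_, ?_⟩
  · show q (Fin.castLE hle (Fin.last (j0 : ℕ))) ≠ 0
    have heq : Fin.castLE hle (Fin.last (j0 : ℕ)) = j0 := Fin.ext rfl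
    rw [heq]
    exact hj0ne
  · intro n
    set Q : ℕ → ℂ := fun m => if hm : m < r + 1 then (q ⟨m, hm⟩).eval (n : ℂ) * a (n + m) else 0
      with hQ
    have e1 : ∑ i : Fin ((j0 : ℕ) + 1), (q (Fin.castLE hle i)).eval (n : ℂ) * a (n + (i : ℕ))
        = ∑ m ∈ Finset.range ((j0 : ℕ) + 1), Q m := by
      rw [← Fin.sum_univ_eq_sum_range Q]
      refine Finset.sum_congr rfl fun i _ => ?_
      have hi : (i : ℕ) < r + 1 := lt_of_lt_of_le i.isLt hle
      simp only [hQ, dif_pos hi]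
      rfl
    have e2 : ∑ j : Fin (r + 1), (q j).eval (n : ℂ) * a (n + (j : ℕ))
        = ∑ m ∈ Finset.range (r + 1), Q m := by
      rw [← Fin.sum_univ_eq_sum_range Q]
      refine Finset.sum_congr rfl fun j _ => ?_
      simp only [hQ, dif_pos j.isLt]
    have hz : ∀ m ∈ Finset.range (r + 1), m ∉ Finset.range ((j0 : ℕ) + 1) → Q m = 0 := by
      intro m hm1 hm2
      rw [Finset.mem_range] at hm1
      rw [Finset.mem_range, not_lt] at hm2
      simp only [hQ, dif_pos hm1]
      have hqm : q ⟨m, hm1⟩ = 0 := hbig ⟨m, hm1⟩ (by simpa [Fin.lt_def] using hm2)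
      rw [hqm]
      simp
    rw [e1, Finset.sum_subset (Finset.range_subset_range.2 hle) hz, ← e2]
    exact hqrec n
end

section
/- Let F be a subfield of ℝ and i the imaginary unit. Then the algebraic closure of F in ℂ equals A_{F(i)}, which equals A_F + i·A_F, where A_F denotes the set of limits of convergent algebraic sequences over F. -/
open Filter Topology Polynomial

/-- A sequence in `F` is algebraic over `F`: its generating power series satisfies a
nonzero polynomial equation `P(z, f(z)) = 0` with `P ∈ F[z,y]`. -/
def IsAlgSeq (F : Subfield ℂ) (a : ℕ → ℂ) : Prop :=
  (∀ n, a n ∈ F) ∧ ∃ P : Polynomial (Polynomial ℂ), P ≠ 0 ∧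
    (∀ m k, ((P.coeff m).coeff k) ∈ F) ∧
    Polynomial.eval₂ Polynomial.coeToPowerSeries.ringHom (PowerSeries.mk a) P = 0

/-- `A_F`: limits of convergent algebraic sequences over `F`. -/
def AlgLimits (F : Subfield ℂ) : Set ℂ :=
  {ξ | ∃ a : ℕ → ℂ, IsAlgSeq F a ∧ Tendsto a atTop (𝓝 ξ)}


noncomputable section

def ee (k : ℕ) : ℝ := if k = 0 then 0 else 1 / (k : ℝ) ^ 2

lemma ee_nonneg (k : ℕ) : 0 ≤ ee k := by
  unfold ee; split <;> positivity

lemma ee_zero : ee 0 = 0 := rfl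

lemma ee_one : ee 1 = 1 := by norm_num [ee]

lemma ee_sum_le' (n : ℕ) : ∑ i ∈ Finset.range (n + 2), ee i ≤ 2 - 1 / (n + 1 : ℝ) := by
  induction n with
  | zero =>
    rw [show (2:ℕ) = 1 + 1 from rfl, Finset.sum_range_succ, Finset.sum_range_one]
    norm_num [ee]
  | succ n ih =>
    rw [Finset.sum_range_succ]
    have h1 : ee (n + 2) = 1 / ((n:ℝ) + 2) ^ 2 := by
      have : (((n + 2 : ℕ)) : ℝ) = (n:ℝ) + 2 := by push_cast; ring
      simp only [ee, if_neg (by omega : n + 2 ≠ 0), this]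
    have h2 : 1 / ((n:ℝ) + 2) ^ 2 ≤ 1 / ((n:ℝ) + 1) - 1 / ((n:ℝ) + 2) := by
      rw [div_sub_div _ _ (by positivity) (by positivity)]
      rw [div_le_div_iff₀ (by positivity) (by positivity)]
      nlinarith [Nat.cast_nonneg (α := ℝ) n]
    have hcast : (((n:ℕ) + 1 : ℕ) : ℝ) + 1 = (n:ℝ) + 2 := by push_cast; ring
    rw [hcast]
    calc ∑ i ∈ Finset.range (n + 2), ee i + ee (n + 2)
        ≤ (2 - 1 / ((n:ℝ) + 1)) + (1 / ((n:ℝ) + 1) - 1 / ((n:ℝ) + 2)) :=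
          add_le_add ih (by rw [h1]; exact h2)
      _ = 2 - 1 / ((n:ℝ) + 2) := by ring

lemma ee_sum_le (n : ℕ) : ∑ i ∈ Finset.range (n + 1), ee i ≤ 2 := by
  cases n with
  | zero => simp [ee]
  | succ m =>
    refine (ee_sum_le' m).trans ?_
    have : (0:ℝ) < 1 / ((m:ℝ) + 1) := by positivity
    linarith

lemma ee_conv (n : ℕ) :
    ∑ p ∈ Finset.HasAntidiagonal.antidiagonal n, ee p.1 * ee p.2 ≤ 16 * ee n := by
  rcases Nat.eq_zero_or_pos n with rfl | hn
  · simp [ee]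
  have hn' : (0:ℝ) < (n:ℝ) := by exact_mod_cast hn
  have hpt : ∀ p ∈ Finset.HasAntidiagonal.antidiagonal n, ee p.1 * ee p.2 ≤ 4 / (n:ℝ)^2 * (ee p.1 + ee p.2) := by
    rintro ⟨i, j⟩ hp
    have hij : i + j = n := Finset.HasAntidiagonal.mem_antidiagonal.mp hp
    have key : ∀ a b : ℕ, a + b = n → a ≤ b → ee a * ee b ≤ 4 / (n:ℝ)^2 * (ee a + ee b) := by
      intro a b hab hle
      have hb : b ≠ 0 := by omega
      have hb0 : (0:ℝ) < (b:ℝ) := by exact_mod_cast Nat.pos_of_ne_zero hb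
      have hbn : (n : ℝ) ≤ 2 * b := by exact_mod_cast (by omega : n ≤ 2 * b)
      have heb : ee b ≤ 4 / (n:ℝ)^2 := by
        rw [ee, if_neg hb, div_le_div_iff₀ (by positivity) (by positivity)]
        nlinarith
      calc ee a * ee b ≤ ee a * (4 / (n:ℝ)^2) := mul_le_mul_of_nonneg_left heb (ee_nonneg a)
        _ ≤ 4 / (n:ℝ)^2 * (ee a + ee b) := by
            have ha := ee_nonneg a; have hbb := ee_nonneg b
            have h4 : (0:ℝ) ≤ 4 / (n:ℝ)^2 := by positivity
            nlinarith
    rcases le_total i j with h | h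
    · exact key i j hij h
    · have := key j i (by omega) h
      calc ee i * ee j = ee j * ee i := by ring
        _ ≤ 4 / (n:ℝ)^2 * (ee j + ee i) := this
        _ = 4 / (n:ℝ)^2 * (ee i + ee j) := by ring
  have hrefl : ∑ p ∈ Finset.HasAntidiagonal.antidiagonal n, ee p.2 ≤ 2 := by
    rw [Finset.Nat.sum_antidiagonal_eq_sum_range_succ_mk]
    have : ∑ i ∈ Finset.range (n+1), ee (n - i) = ∑ i ∈ Finset.range (n+1), ee i := by
      simpa using Finset.sum_range_reflect ee (n+1)
    simp only [this]
    exact ee_sum_le n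
  have h1 : ∑ p ∈ Finset.HasAntidiagonal.antidiagonal n, ee p.1 ≤ 2 := by
    rw [Finset.Nat.sum_antidiagonal_eq_sum_range_succ_mk]
    exact ee_sum_le n
  calc ∑ p ∈ Finset.HasAntidiagonal.antidiagonal n, ee p.1 * ee p.2
      ≤ ∑ p ∈ Finset.HasAntidiagonal.antidiagonal n, 4 / (n:ℝ)^2 * (ee p.1 + ee p.2) := Finset.sum_le_sum hpt
    _ = 4 / (n:ℝ)^2 * (∑ p ∈ Finset.HasAntidiagonal.antidiagonal n, ee p.1 + ∑ p ∈ Finset.HasAntidiagonal.antidiagonal n, ee p.2) := by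
        rw [← Finset.mul_sum, Finset.sum_add_distrib]
    _ ≤ 4 / (n:ℝ)^2 * (2 + 2) := by gcongr
    _ = 16 * ee n := by
        rw [ee, if_neg (Nat.pos_iff_ne_zero.mp hn)]
        field_simp
        ring


def sumAt (W : PowerSeries ℂ) (z : ℂ) : ℂ :=
  ∑' n, PowerSeries.coeff n W * z ^ n

def NSum (W : PowerSeries ℂ) (z : ℂ) : Prop :=
  Summable fun n => ‖PowerSeries.coeff n W‖ * ‖z‖ ^ n

lemma NSum.norm_summable {W z} (h : NSum W z) :
    Summable fun n => ‖PowerSeries.coeff n W * z ^ n‖ := by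
  simpa [NSum, norm_mul, norm_pow] using h

lemma NSum.summable {W z} (h : NSum W z) :
    Summable fun n => PowerSeries.coeff n W * z ^ n :=
  (h.norm_summable).of_norm

lemma NSum.add {V W z} (hV : NSum V z) (hW : NSum W z) : NSum (V + W) z := by
  refine Summable.of_nonneg_of_le (fun n => by positivity) (fun n => ?_) (Summable.add hV hW)
  simp only [map_add]
  have := norm_add_le (PowerSeries.coeff n V) (PowerSeries.coeff n W)
  have hz : (0:ℝ) ≤ ‖z‖ ^ n := by positivity
  nlinarith [norm_nonneg (PowerSeries.coeff n V), norm_nonneg (PowerSeries.coeff n W)]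

lemma sumAt_add {V W z} (hV : NSum V z) (hW : NSum W z) :
    sumAt (V + W) z = sumAt V z + sumAt W z := by
  unfold sumAt
  simp only [map_add, add_mul]
  exact Summable.tsum_add hV.summable hW.summable

lemma NSum.mul {V W z} (hV : NSum V z) (hW : NSum W z) : NSum (V * W) z := by
  have h := summable_norm_sum_mul_antidiagonal_of_summable_norm
    (f := fun n => PowerSeries.coeff n V * z ^ n)
    (g := fun n => PowerSeries.coeff n W * z ^ n) hV.norm_summable hW.norm_summable
  have : ∀ n : ℕ, ∑ kl ∈ Finset.HasAntidiagonal.antidiagonal n,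
      (PowerSeries.coeff kl.1 V * z ^ kl.1) * (PowerSeries.coeff kl.2 W * z ^ kl.2)
      = PowerSeries.coeff n (V * W) * z ^ n := by
    intro n
    rw [PowerSeries.coeff_mul, Finset.sum_mul]
    refine Finset.sum_congr rfl fun kl hkl => ?_
    have : kl.1 + kl.2 = n := Finset.HasAntidiagonal.mem_antidiagonal.mp hkl
    rw [← this, pow_add]; ring
  simp only [this] at h
  simpa [NSum, norm_mul, norm_pow] using h

lemma sumAt_mul {V W z} (hV : NSum V z) (hW : NSum W z) :
    sumAt (V * W) z = sumAt V z * sumAt W z := by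
  unfold sumAt
  rw [tsum_mul_tsum_eq_tsum_sum_antidiagonal_of_summable_norm hV.norm_summable hW.norm_summable]
  congr 1; funext n
  rw [PowerSeries.coeff_mul, Finset.sum_mul]
  refine Finset.sum_congr rfl fun kl hkl => ?_
  have : kl.1 + kl.2 = n := Finset.HasAntidiagonal.mem_antidiagonal.mp hkl
  rw [← this, pow_add]; ring

lemma NSum_coe (q : Polynomial ℂ) (z : ℂ) : NSum (q : PowerSeries ℂ) z := by
  apply summable_of_ne_finset_zero (s := Finset.range (q.natDegree + 1))
  intro n hn
  have : q.coeff n = 0 := q.coeff_eq_zero_of_natDegree_lt (by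
    simpa using Nat.lt_of_succ_le (Nat.succ_le_of_lt (by
      simpa [Nat.lt_succ_iff] using not_lt.mp (fun h => hn (Finset.mem_range.mpr h)))))
  simp [Polynomial.coeff_coe, this]

lemma sumAt_coe (q : Polynomial ℂ) (z : ℂ) : sumAt (q : PowerSeries ℂ) z = q.eval z := by
  unfold sumAt
  rw [tsum_eq_sum (s := Finset.range (q.natDegree + 1)) ?h]
  · rw [Polynomial.eval_eq_sum_range]
    exact Finset.sum_congr rfl fun n _ => by simp [Polynomial.coeff_coe]
  case h =>
    intro n hn
    have hlt : q.natDegree < n := by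
      by_contra h
      exact hn (Finset.mem_range.mpr (Nat.lt_succ_of_le (not_lt.mp h)))
    simp [Polynomial.coeff_coe, q.coeff_eq_zero_of_natDegree_lt hlt]

lemma NSum_one (z : ℂ) : NSum 1 z := by
  simpa using NSum_coe 1 z

lemma sumAt_one (z : ℂ) : sumAt 1 z = 1 := by simpa using sumAt_coe 1 z

lemma NSum.pow {U z} (hU : NSum U z) (j : ℕ) : NSum (U ^ j) z := by
  induction j with
  | zero => simpa using NSum_one z
  | succ j ih => rw [pow_succ]; exact ih.mul hU

lemma sumAt_pow {U z} (hU : NSum U z) (j : ℕ) : sumAt (U ^ j) z = (sumAt U z) ^ j := by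
  induction j with
  | zero => simpa using sumAt_one z
  | succ j ih => rw [pow_succ, sumAt_mul (hU.pow j) hU, ih, pow_succ]

lemma NSum_zero (z : ℂ) : NSum 0 z := by simpa using NSum_coe 0 z

lemma sumAt_zero (z : ℂ) : sumAt 0 z = 0 := by simpa using sumAt_coe 0 z

lemma NSum_sum {s : Finset ℕ} {f : ℕ → PowerSeries ℂ} {z : ℂ}
    (h : ∀ i ∈ s, NSum (f i) z) : NSum (∑ i ∈ s, f i) z := by
  classical
  induction s using Finset.induction_on with
  | empty => simpa using NSum_zero z
  | @insert a s' hni ih =>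
    rw [Finset.sum_insert hni]
    exact (h a (Finset.mem_insert_self a s')).add
      (ih fun i hi => h i (Finset.mem_insert_of_mem hi))

lemma sumAt_sum {s : Finset ℕ} {f : ℕ → PowerSeries ℂ} {z : ℂ}
    (h : ∀ i ∈ s, NSum (f i) z) :
    sumAt (∑ i ∈ s, f i) z = ∑ i ∈ s, sumAt (f i) z := by
  classical
  induction s using Finset.induction_on with
  | empty => simpa using sumAt_zero z
  | @insert a s' hni ih =>
    rw [Finset.sum_insert hni, Finset.sum_insert hni,
      sumAt_add (h a (Finset.mem_insert_self a s'))
        (NSum_sum fun i hi => h i (Finset.mem_insert_of_mem hi)),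
      ih fun i hi => h i (Finset.mem_insert_of_mem hi)]


lemma NSum_C (c : ℂ) (z : ℂ) : NSum (PowerSeries.C c) z := by
  rw [← Polynomial.coe_C]; exact NSum_coe _ z

lemma sumAt_C (c : ℂ) (z : ℂ) : sumAt (PowerSeries.C c) z = c := by
  rw [← Polynomial.coe_C, sumAt_coe, Polynomial.eval_C]

-- eval₂ of a polynomial over ℂ[X] into power series, summed
lemma sumAt_eval₂ (R : Polynomial (Polynomial ℂ)) (f : PowerSeries ℂ) (z : ℂ) (hf : NSum f z) :
    sumAt (Polynomial.eval₂ Polynomial.coeToPowerSeries.ringHom f R) z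
      = ∑ m ∈ Finset.range (R.natDegree + 1), (R.coeff m).eval z * (sumAt f z) ^ m := by
  rw [Polynomial.eval₂_eq_sum_range]
  simp only [Polynomial.coeToPowerSeries.ringHom_apply]
  rw [sumAt_sum (fun i _ => (NSum_coe _ z).mul (hf.pow i))]
  refine Finset.sum_congr rfl fun m _ => ?_
  rw [sumAt_mul (NSum_coe _ z) (hf.pow m), sumAt_coe, sumAt_pow hf]

lemma sumAt_eval₂C (q : Polynomial ℂ) (U : PowerSeries ℂ) (z : ℂ) (hU : NSum U z) :
    sumAt (Polynomial.eval₂ (PowerSeries.C) U q) z = q.eval (sumAt U z) := by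
  rw [Polynomial.eval₂_eq_sum_range]
  rw [sumAt_sum (fun i _ => (NSum_C _ z).mul (hU.pow i))]
  rw [Polynomial.eval_eq_sum_range]
  refine Finset.sum_congr rfl fun m _ => ?_
  rw [sumAt_mul (NSum_C _ z) (hU.pow m), sumAt_C, sumAt_pow hU]


namespace PSaux

open PowerSeries

lemma constantCoeff_pow_eq_zero {u : ℕ → ℂ} (hu : u 0 = 0) {j : ℕ} (hj : 1 ≤ j) :
    PowerSeries.coeff 0 ((PowerSeries.mk u) ^ j) = 0 := by
  have h0 : (PowerSeries.constantCoeff) (PowerSeries.mk u) = 0 := by simp [hu]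
  rw [PowerSeries.coeff_zero_eq_constantCoeff, map_pow, h0, zero_pow (by omega : j ≠ 0)]

/-- coefficients of powers only depend on earlier coefficients (zero constant term) -/
lemma coeff_pow_congr {u v : ℕ → ℂ} (hu : u 0 = 0) (hv : v 0 = 0) {m : ℕ}
    (h : ∀ k < m, u k = v k) :
    ∀ j, 1 ≤ j →
      (∀ m' < m, PowerSeries.coeff m' ((PowerSeries.mk u) ^ j)
        = PowerSeries.coeff m' ((PowerSeries.mk v) ^ j)) ∧
      (2 ≤ j → PowerSeries.coeff m ((PowerSeries.mk u) ^ j)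
        = PowerSeries.coeff m ((PowerSeries.mk v) ^ j)) := by
  intro j hj
  induction j with
  | zero => omega
  | succ j ih =>
    rcases Nat.eq_zero_or_pos j with rfl | hj1
    · constructor
      · intro m' hm'
        simp only [zero_add, pow_one, PowerSeries.coeff_mk]
        exact h m' hm'
      · omega
    obtain ⟨ih1, _⟩ := ih hj1
    have step : ∀ m' ≤ m, PowerSeries.coeff m' ((PowerSeries.mk u) ^ (j+1))
        = PowerSeries.coeff m' ((PowerSeries.mk v) ^ (j+1)) := by
      intro m' hm'
      rw [pow_succ, pow_succ, PowerSeries.coeff_mul, PowerSeries.coeff_mul]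
      refine Finset.sum_congr rfl ?_
      rintro ⟨s, t⟩ hst
      have hsum : s + t = m' := Finset.HasAntidiagonal.mem_antidiagonal.mp hst
      simp only [PowerSeries.coeff_mk]
      rcases Nat.eq_zero_or_pos t with rfl | ht
      · rw [hu, hv, mul_zero, mul_zero]
      rcases Nat.eq_zero_or_pos s with rfl | hs
      · rw [constantCoeff_pow_eq_zero hu hj1, constantCoeff_pow_eq_zero hv hj1,
          zero_mul, zero_mul]
      rw [ih1 s (by omega), h t (by omega)]
    exact ⟨fun m' hm' => step m' (le_of_lt hm'), fun _ => step m le_rfl⟩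

/-- norm bound for coefficients of powers -/
lemma coeff_pow_bound {u : ℕ → ℂ} {β : ℝ} (hβ : 0 ≤ β)
    (hb : ∀ k, ‖u k‖ ≤ β * ee k) :
    ∀ j, 1 ≤ j → ∀ n, ‖PowerSeries.coeff n ((PowerSeries.mk u) ^ j)‖
      ≤ β ^ j * 16 ^ (j - 1) * ee n := by
  intro j hj
  induction j with
  | zero => omega
  | succ j ih =>
    rcases Nat.eq_zero_or_pos j with rfl | hj1
    · intro n
      simp only [zero_add, pow_one, PowerSeries.coeff_mk]
      simpa using hb n
    intro n
    rw [pow_succ, PowerSeries.coeff_mul]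
    calc ‖∑ p ∈ Finset.HasAntidiagonal.antidiagonal n,
          PowerSeries.coeff p.1 ((PowerSeries.mk u) ^ j) * PowerSeries.coeff p.2 (PowerSeries.mk u)‖
        ≤ ∑ p ∈ Finset.HasAntidiagonal.antidiagonal n,
          ‖PowerSeries.coeff p.1 ((PowerSeries.mk u) ^ j) * PowerSeries.coeff p.2 (PowerSeries.mk u)‖ :=
          norm_sum_le _ _
      _ ≤ ∑ p ∈ Finset.HasAntidiagonal.antidiagonal n, (β ^ j * 16 ^ (j-1) * ee p.1) * (β * ee p.2) := by
          refine Finset.sum_le_sum ?_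
          rintro ⟨s, t⟩ _
          rw [norm_mul]
          have h1 := ih hj1 s
          have h2 : ‖PowerSeries.coeff t (PowerSeries.mk u)‖ ≤ β * ee t := by
            simpa using hb t
          exact mul_le_mul h1 h2 (norm_nonneg _) (mul_nonneg (by positivity) (ee_nonneg _))
      _ = (β ^ j * 16 ^ (j-1) * β) * ∑ p ∈ Finset.HasAntidiagonal.antidiagonal n, ee p.1 * ee p.2 := by
          rw [Finset.mul_sum]; refine Finset.sum_congr rfl fun p _ => by ring
      _ ≤ (β ^ j * 16 ^ (j-1) * β) * (16 * ee n) := by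
          refine mul_le_mul_of_nonneg_left (ee_conv n) (by positivity)

      _ = β ^ (j+1) * (16 ^ (j-1) * 16) * ee n := by ring
      _ = β ^ (j+1) * 16 ^ ((j+1) - 1) * ee n := by
          congr 2
          rw [← pow_succ]
          congr 1
          omega

/-- K-membership of coefficients of powers -/
lemma coeff_pow_mem (K : Subfield ℂ) {u : ℕ → ℂ} (hu : ∀ k, u k ∈ K) (j : ℕ) (n : ℕ) :
    PowerSeries.coeff n ((PowerSeries.mk u) ^ j) ∈ K := by
  induction j generalizing n with
  | zero =>
    rw [pow_zero]
    rcases Nat.eq_zero_or_pos n with rfl | hn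
    · simpa using K.one_mem
    · rw [PowerSeries.coeff_one, if_neg (by omega)]
      exact K.zero_mem
  | succ j ih =>
    rw [pow_succ, PowerSeries.coeff_mul]
    refine Subfield.sum_mem K ?_
    rintro ⟨s, t⟩ _
    exact K.mul_mem (ih s) (by simpa using hu t)

end PSaux


def Eser (q : Polynomial ℂ) (U : PowerSeries ℂ) : PowerSeries ℂ :=
  ∑ j ∈ Finset.Icc 2 q.natDegree, PowerSeries.C (q.coeff j) * U ^ j

def newc (q : Polynomial ℂ) (prev : ℕ → ℂ) (n : ℕ) : ℂ :=
  -(q.coeff 1)⁻¹ * ((if n = 1 then q.coeff 0 else 0)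
    + PowerSeries.coeff n (Eser q (PowerSeries.mk prev)))

def cfun (q : Polynomial ℂ) : ℕ → ℕ → ℂ
  | 0 => fun _ => 0
  | (n+1) => fun k =>
      if k ≤ n then cfun q n k else if k = n + 1 then newc q (cfun q n) (n+1) else 0

def cseq (q : Polynomial ℂ) (n : ℕ) : ℂ := cfun q n n

lemma cseq_zero (q : Polynomial ℂ) : cseq q 0 = 0 := rfl

lemma cfun_eq (q : Polynomial ℂ) (n k : ℕ) :
    cfun q n k = if k ≤ n then cseq q k else 0 := by
  induction n with
  | zero =>
    rcases Nat.eq_zero_or_pos k with rfl | hk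
    · simp [cfun, cseq]
    · simp [cfun, Nat.pos_iff_ne_zero.mp hk, (by omega : ¬ k ≤ 0)]
  | succ n ih =>
    rcases Nat.lt_or_ge k (n+1) with hk | hk
    · have hk' : k ≤ n := by omega
      simp only [cfun, if_pos hk', ih, if_pos (by omega : k ≤ n + 1)]
    rcases eq_or_lt_of_le hk with hk2 | hk2
    · subst hk2
      rw [if_pos le_rfl]
      rfl
    · simp only [cfun, if_neg (by omega : ¬ k ≤ n), if_neg (by omega : ¬ k = n + 1),
        if_neg (by omega : ¬ k ≤ n + 1)]

lemma cseq_succ (q : Polynomial ℂ) (n : ℕ) :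
    cseq q (n+1) = newc q (fun k => if k ≤ n then cseq q k else 0) (n+1) := by
  have : cseq q (n+1) = newc q (cfun q n) (n+1) := by
    show cfun q (n+1) (n+1) = _
    rw [show cfun q (n+1) (n+1)
        = if n+1 ≤ n then cfun q n (n+1) else if n+1 = n+1 then newc q (cfun q n) (n+1) else 0
      from rfl, if_neg (by omega : ¬ n + 1 ≤ n), if_pos rfl]
  rw [this]
  congr 1
  funext k
  exact cfun_eq q n k

lemma coeff_Eser_congr (q : Polynomial ℂ) {u v : ℕ → ℂ} (hu : u 0 = 0) (hv : v 0 = 0)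
    {m : ℕ} (h : ∀ k < m, u k = v k) :
    PowerSeries.coeff m (Eser q (PowerSeries.mk u))
      = PowerSeries.coeff m (Eser q (PowerSeries.mk v)) := by
  unfold Eser
  rw [map_sum, map_sum]
  refine Finset.sum_congr rfl fun j hj => ?_
  have hj2 : 2 ≤ j := (Finset.mem_Icc.mp hj).1
  rw [PowerSeries.coeff_C_mul, PowerSeries.coeff_C_mul,
    (PSaux.coeff_pow_congr hu hv h j (by omega)).2 hj2]

lemma coeff_Eser_zero (q : Polynomial ℂ) {u : ℕ → ℂ} (hu : u 0 = 0) :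
    PowerSeries.coeff 0 (Eser q (PowerSeries.mk u)) = 0 := by
  unfold Eser
  rw [map_sum]
  refine Finset.sum_eq_zero fun j hj => ?_
  have hj2 : 2 ≤ j := (Finset.mem_Icc.mp hj).1
  rw [PowerSeries.coeff_C_mul, PSaux.constantCoeff_pow_eq_zero hu (by omega), mul_zero]

lemma cseq_master (q : Polynomial ℂ) (hd1 : q.coeff 1 ≠ 0) (n : ℕ) (hn : 1 ≤ n) :
    q.coeff 1 * cseq q n
      + ((if n = 1 then q.coeff 0 else 0)
        + PowerSeries.coeff n (Eser q (PowerSeries.mk (cseq q)))) = 0 := by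
  obtain ⟨m, rfl⟩ : ∃ m, n = m + 1 := ⟨n - 1, by omega⟩
  rw [cseq_succ]
  have hcong : PowerSeries.coeff (m+1) (Eser q (PowerSeries.mk (cseq q)))
      = PowerSeries.coeff (m+1)
        (Eser q (PowerSeries.mk (fun k => if k ≤ m then cseq q k else 0))) := by
    refine coeff_Eser_congr q (cseq_zero q) (by simp [cseq_zero]) ?_
    intro k hk
    rw [if_pos (by omega : k ≤ m)]
  rw [hcong]
  unfold newc
  field_simp
  ring

lemma cseq_mem (K : Subfield ℂ) (q : Polynomial ℂ) (hq : ∀ k, q.coeff k ∈ K) :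
    ∀ n, cseq q n ∈ K := by
  intro n
  induction n using Nat.strong_induction_on with
  | _ n ih =>
    rcases Nat.eq_zero_or_pos n with rfl | hn
    · rw [cseq_zero]; exact K.zero_mem
    obtain ⟨m, rfl⟩ : ∃ m, n = m + 1 := ⟨n - 1, by omega⟩
    rw [cseq_succ]
    unfold newc
    refine K.mul_mem (K.neg_mem (K.inv_mem (hq 1))) (K.add_mem ?_ ?_)
    · split
      · exact hq 0
      · exact K.zero_mem
    · unfold Eser
      rw [map_sum]
      refine K.sum_mem fun j hj => ?_
      rw [PowerSeries.coeff_C_mul]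
      refine K.mul_mem (hq j) (PSaux.coeff_pow_mem K ?_ j (m+1))
      intro k
      split
      · exact ih k (by omega)
      · exact K.zero_mem

lemma cseq_bound (q : Polynomial ℂ) (β : ℝ) (hβ : 0 < β) (hβ16 : 16 * β ≤ 1)
    (hd1 : q.coeff 1 ≠ 0)
    (hc1 : ‖q.coeff 1‖⁻¹ * ‖q.coeff 0‖ ≤ β / 2)
    (hE : ‖q.coeff 1‖⁻¹ * ((∑ j ∈ Finset.Icc 2 q.natDegree, ‖q.coeff j‖) * (16 * β)) ≤ 1 / 2) :
    ∀ n, ‖cseq q n‖ ≤ β * ee n := by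
  intro n
  induction n using Nat.strong_induction_on with
  | _ n ih =>
    rcases Nat.eq_zero_or_pos n with rfl | hn
    · rw [cseq_zero]
      simp [ee]
    obtain ⟨m, rfl⟩ : ∃ m, n = m + 1 := ⟨n - 1, by omega⟩
    rw [cseq_succ]
    unfold newc
    set prev : ℕ → ℂ := fun k => if k ≤ m then cseq q k else 0 with hprev
    have hprevb : ∀ k, ‖prev k‖ ≤ β * ee k := by
      intro k
      rw [hprev]
      dsimp only
      split
      · exact ih k (by omega)
      · rw [norm_zero]; exact mul_nonneg hβ.le (ee_nonneg k)
    have hEb : ‖PowerSeries.coeff (m+1) (Eser q (PowerSeries.mk prev))‖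
        ≤ (∑ j ∈ Finset.Icc 2 q.natDegree, ‖q.coeff j‖) * (16 * β) * (β * ee (m+1)) := by
      unfold Eser
      rw [map_sum]
      calc ‖∑ j ∈ Finset.Icc 2 q.natDegree,
            PowerSeries.coeff (m+1) (PowerSeries.C (q.coeff j) * PowerSeries.mk prev ^ j)‖
          ≤ ∑ j ∈ Finset.Icc 2 q.natDegree,
            ‖PowerSeries.coeff (m+1) (PowerSeries.C (q.coeff j) * PowerSeries.mk prev ^ j)‖ :=
            norm_sum_le _ _
        _ ≤ ∑ j ∈ Finset.Icc 2 q.natDegree, ‖q.coeff j‖ * (16 * β * (β * ee (m+1))) := by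
            refine Finset.sum_le_sum fun j hj => ?_
            have hj2 : 2 ≤ j := (Finset.mem_Icc.mp hj).1
            rw [PowerSeries.coeff_C_mul, norm_mul]
            refine mul_le_mul_of_nonneg_left ?_ (norm_nonneg _)
            refine (PSaux.coeff_pow_bound hβ.le hprevb j (by omega) (m+1)).trans ?_
            have hkey : β ^ j * 16 ^ (j-1) ≤ 16 * β ^ 2 := by
              have h1 : β ^ j * 16 ^ (j-1) = 16 * β^2 * (16*β)^(j-2) := by
                obtain ⟨k, rfl⟩ : ∃ k, j = k + 2 := ⟨j - 2, by omega⟩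
                rw [show k + 2 - 1 = k + 1 by omega, show k + 2 - 2 = k by omega,
                  mul_pow, pow_succ, pow_add]
                ring
              rw [h1]
              have : (16*β)^(j-2) ≤ 1 := pow_le_one₀ (by positivity) hβ16
              nlinarith [sq_nonneg β, hβ.le]
            calc β ^ j * 16 ^ (j-1) * ee (m+1) ≤ 16 * β^2 * ee (m+1) :=
                  mul_le_mul_of_nonneg_right hkey (ee_nonneg _)
              _ = 16 * β * (β * ee (m+1)) := by ring
        _ = (∑ j ∈ Finset.Icc 2 q.natDegree, ‖q.coeff j‖) * (16 * β * (β * ee (m+1))) := by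
            rw [← Finset.sum_mul]
        _ = (∑ j ∈ Finset.Icc 2 q.natDegree, ‖q.coeff j‖) * (16 * β) * (β * ee (m+1)) := by
            ring
    rw [norm_mul, norm_neg, norm_inv]
    have hnorm1 : (0:ℝ) < ‖q.coeff 1‖ := norm_pos_iff.mpr hd1
    have htri : ‖(if m + 1 = 1 then q.coeff 0 else 0)
        + PowerSeries.coeff (m+1) (Eser q (PowerSeries.mk prev))‖
        ≤ ‖(if m + 1 = 1 then q.coeff 0 else 0)‖
          + ‖PowerSeries.coeff (m+1) (Eser q (PowerSeries.mk prev))‖ := norm_add_le _ _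
    rcases Nat.eq_zero_or_pos m with rfl | hm
    · -- n = 1
      rw [ee_one, mul_one]
      simp only [if_pos rfl] at htri ⊢
      have := hEb
      rw [ee_one, mul_one] at this
      calc ‖q.coeff 1‖⁻¹ * ‖(q.coeff 0) + PowerSeries.coeff 1 (Eser q (PowerSeries.mk prev))‖
          ≤ ‖q.coeff 1‖⁻¹ * (‖q.coeff 0‖
            + (∑ j ∈ Finset.Icc 2 q.natDegree, ‖q.coeff j‖) * (16 * β) * β) := by
            refine mul_le_mul_of_nonneg_left ?_ (by positivity)
            refine (norm_add_le _ _).trans (add_le_add le_rfl this)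
        _ = ‖q.coeff 1‖⁻¹ * ‖q.coeff 0‖
            + ‖q.coeff 1‖⁻¹ * ((∑ j ∈ Finset.Icc 2 q.natDegree, ‖q.coeff j‖) * (16 * β)) * β := by
            ring
        _ ≤ β / 2 + (1/2) * β := by
            refine add_le_add hc1 (mul_le_mul_of_nonneg_right hE hβ.le)
        _ = β := by ring
    · -- n ≥ 2
      rw [if_neg (by omega : ¬ m + 1 = 1)] at htri ⊢
      simp only [norm_zero, zero_add] at htri
      calc ‖q.coeff 1‖⁻¹ * ‖(0:ℂ) + PowerSeries.coeff (m+1) (Eser q (PowerSeries.mk prev))‖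
          ≤ ‖q.coeff 1‖⁻¹ * ((∑ j ∈ Finset.Icc 2 q.natDegree, ‖q.coeff j‖) * (16 * β) * (β * ee (m+1))) := by
            refine mul_le_mul_of_nonneg_left ?_ (by positivity)
            rw [zero_add]
            exact hEb
        _ = ‖q.coeff 1‖⁻¹ * ((∑ j ∈ Finset.Icc 2 q.natDegree, ‖q.coeff j‖) * (16 * β)) * (β * ee (m+1)) := by
            ring
        _ ≤ (1/2) * (β * ee (m+1)) := by
            refine mul_le_mul_of_nonneg_right hE (mul_nonneg hβ.le (ee_nonneg _))
        _ ≤ β * ee (m+1) := by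
            have := mul_nonneg hβ.le (ee_nonneg (m+1))
            linarith


lemma formal_id (q : Polynomial ℂ) (hd1 : q.coeff 1 ≠ 0) :
    Polynomial.eval₂ (PowerSeries.C) (PowerSeries.mk (cseq q)) q
      = (1 - PowerSeries.X) * PowerSeries.C (q.coeff 0) := by
  have hD : 1 ≤ q.natDegree := le_natDegree_of_ne_zero hd1
  have hsplit : Finset.range (q.natDegree + 1)
      = insert 0 (insert 1 (Finset.Icc 2 q.natDegree)) := by
    ext i
    simp only [Finset.mem_range, Finset.mem_insert, Finset.mem_Icc]
    omega
  rw [Polynomial.eval₂_eq_sum_range, hsplit, Finset.sum_insert (by simp),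
    Finset.sum_insert (by simp)]
  set U := PowerSeries.mk (cseq q) with hU
  have hEq : ∑ i ∈ Finset.Icc 2 q.natDegree, PowerSeries.C (q.coeff i) * U ^ i
      = Eser q U := rfl
  rw [hEq]
  ext n
  rw [sub_mul, one_mul]
  rcases Nat.eq_zero_or_pos n with rfl | hn
  · simp only [map_add, map_sub, pow_zero, mul_one, pow_one]
    rw [PowerSeries.coeff_zero_X_mul, PowerSeries.coeff_C_mul,
      coeff_Eser_zero q (cseq_zero q)]
    simp [hU, cseq_zero q]
  obtain ⟨m, rfl⟩ : ∃ m, n = m + 1 := ⟨n - 1, by omega⟩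
  have hmaster := cseq_master q hd1 (m+1) (by omega)
  simp only [map_add, map_sub, pow_zero, mul_one, pow_one]
  rw [PowerSeries.coeff_succ_X_mul, PowerSeries.coeff_C_mul]
  have hC1 : PowerSeries.coeff (m+1) (PowerSeries.C (q.coeff 0)) = 0 := by
    rw [PowerSeries.coeff_C, if_neg (by omega)]
  have hCm : PowerSeries.coeff m (PowerSeries.C (q.coeff 0))
      = if m = 0 then q.coeff 0 else 0 := PowerSeries.coeff_C m _
  rw [hC1, hCm]
  have hUc : PowerSeries.coeff (m+1) U = cseq q (m+1) := by
    rw [hU, PowerSeries.coeff_mk]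
  rw [hUc]
  have : (if m + 1 = 1 then q.coeff 0 else 0) = (if m = 0 then q.coeff 0 else 0) := by
    exact if_congr (by omega) rfl rfl
  rw [this] at hmaster
  linear_combination hmaster


lemma summable_ee : Summable ee := by
  refine summable_of_sum_range_le (c := 2) ee_nonneg fun n => ?_
  calc ∑ i ∈ Finset.range n, ee i ≤ ∑ i ∈ Finset.range (n+1), ee i := by
        refine Finset.sum_le_sum_of_subset_of_nonneg ?_ fun i _ _ => ee_nonneg i
        exact Finset.range_subset_range.mpr (by omega)
    _ ≤ 2 := ee_sum_le n

lemma evalK (K : Subfield ℂ) {g : Polynomial ℂ} (hg : ∀ k, g.coeff k ∈ K) {x : ℂ}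
    (hx : x ∈ K) : g.eval x ∈ K := by
  rw [Polynomial.eval_eq_sum_range]
  exact K.sum_mem fun i _ => K.mul_mem (hg i) (K.pow_mem hx i)

lemma polyK_coeff_mul (K : Subfield ℂ) {g h : Polynomial ℂ} (hg : ∀ k, g.coeff k ∈ K)
    (hh : ∀ k, h.coeff k ∈ K) : ∀ k, (g * h).coeff k ∈ K := by
  intro k
  rw [Polynomial.coeff_mul]
  exact K.sum_mem fun p _ => K.mul_mem (hg p.1) (hh p.2)

lemma polyK_coeff_pow (K : Subfield ℂ) {g : Polynomial ℂ} (hg : ∀ k, g.coeff k ∈ K) (i : ℕ) :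
    ∀ k, (g ^ i).coeff k ∈ K := by
  induction i with
  | zero =>
    intro k
    rw [pow_zero, Polynomial.coeff_one]
    split <;> [exact K.one_mem; exact K.zero_mem]
  | succ i ih =>
    rw [pow_succ]
    exact polyK_coeff_mul K ih hg

lemma polyK_one_sub_X (K : Subfield ℂ) : ∀ k, ((1 - Polynomial.X : Polynomial ℂ)).coeff k ∈ K := by
  intro k
  rw [Polynomial.coeff_sub, Polynomial.coeff_one, Polynomial.coeff_X]
  refine K.sub_mem ?_ ?_
  · split
    · exact K.one_mem
    · exact K.zero_mem
  · split
    · exact K.one_mem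
    · exact K.zero_mem

lemma coeff_sum_CXpow {R : Type*} [CommRing R] (N : ℕ) (g : ℕ → R) (m : ℕ) :
    (∑ i ∈ Finset.range N, Polynomial.C (g i) * Polynomial.X ^ i).coeff m
      = if m < N then g m else 0 := by
  rw [Polynomial.finset_sum_coeff]
  simp only [Polynomial.coeff_C_mul, Polynomial.coeff_X_pow, mul_ite, mul_one, mul_zero]
  rw [Finset.sum_ite_eq (Finset.range N) m g]
  simp [Finset.mem_range]

theorem mem_algLimits (K : Subfield ℂ) (ξ : ℂ) (halg : IsAlgebraic K ξ)
    (happ : ∀ ε : ℝ, 0 < ε → ∃ b ∈ K, ‖b - ξ‖ < ε) : ξ ∈ AlgLimits K := by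
  classical
  have hint : IsIntegral K ξ := isAlgebraic_iff_isIntegral.mp halg
  set p : Polynomial ℂ := (minpoly K ξ).map (algebraMap K ℂ) with hp
  have hmonic : p.Monic := (minpoly.monic hint).map _
  have hpne : p ≠ 0 := hmonic.ne_zero
  have hpco : ∀ k, p.coeff k ∈ K := by
    intro k
    rw [hp, Polynomial.coeff_map]
    exact ((minpoly K ξ).coeff k).2
  have hpeval : p.eval ξ = 0 := by
    rw [hp, Polynomial.eval_map]
    exact minpoly.aeval K ξ
  have hD : 1 ≤ p.natDegree := by
    rw [hp, (minpoly.monic hint).natDegree_map]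
    exact minpoly.natDegree_pos hint
  have hsep : p.Separable := ((minpoly.irreducible hint).separable).map
  have hderiv : Polynomial.eval ξ (Polynomial.derivative p) ≠ 0 := by
    obtain ⟨u, v, huv⟩ := hsep
    intro h0
    have h1 := congrArg (Polynomial.eval ξ) huv
    simp only [Polynomial.eval_add, Polynomial.eval_mul, hpeval, h0, mul_zero,
      Polynomial.eval_one] at h1
    norm_num at h1
  -- root separation
  set S : Finset ℂ := p.roots.toFinset.erase ξ with hS
  set sep : ℝ := if h : S.Nonempty then S.inf' h (fun y => ‖y - ξ‖) else 1 with hsepdef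
  have hsep_pos : 0 < sep := by
    rw [hsepdef]
    split
    · rename_i h
      rw [Finset.lt_inf'_iff]
      intro y hy
      have hyne : y ≠ ξ := (Finset.mem_erase.mp hy).1
      have : y - ξ ≠ 0 := sub_ne_zero.mpr hyne
      exact norm_pos_iff.mpr this
    · norm_num
  have hroot : ∀ y : ℂ, p.eval y = 0 → ‖y - ξ‖ < sep → y = ξ := by
    intro y hy hlt
    by_contra hne
    have hyS : y ∈ S := by
      rw [hS, Finset.mem_erase]
      refine ⟨hne, ?_⟩
      rw [Multiset.mem_toFinset, Polynomial.mem_roots hpne]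
      exact hy
    have hSne : S.Nonempty := ⟨y, hyS⟩
    rw [hsepdef, dif_pos hSne] at hlt
    exact absurd (Finset.inf'_le _ hyS) (not_le.mpr hlt)
  -- constants
  set α : ℝ := ‖Polynomial.eval ξ (Polynomial.derivative p)‖ with hα
  have hαpos : 0 < α := norm_pos_iff.mpr hderiv
  set M : ℝ := (∑ j ∈ Finset.Icc 2 p.natDegree,
      ‖Polynomial.eval ξ (Polynomial.hasseDeriv j p)‖) + 1 with hM
  have hMpos : 0 < M := by
    rw [hM]
    have : (0:ℝ) ≤ ∑ j ∈ Finset.Icc 2 p.natDegree,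
        ‖Polynomial.eval ξ (Polynomial.hasseDeriv j p)‖ :=
      Finset.sum_nonneg fun j _ => norm_nonneg _
    linarith
  set β : ℝ := min (1/32) (min (sep/8) (α/(128*M))) with hβ
  have hden : (0:ℝ) < 128 * M := by linarith
  have hβpos : 0 < β := by
    rw [hβ]
    exact lt_min (by norm_num) (lt_min (by linarith) (div_pos hαpos hden))
  have hβ16 : 16 * β ≤ 1 := by
    have : β ≤ 1/32 := min_le_left _ _
    linarith
  have hβsep : β ≤ sep / 8 := le_trans (min_le_right _ _) (min_le_left _ _)
  have hβM : 128 * M * β ≤ α := by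
    have h1 : β ≤ α / (128 * M) := le_trans (min_le_right _ _) (min_le_right _ _)
    have h2 : 0 < 128 * M := by linarith
    calc 128 * M * β ≤ 128 * M * (α / (128 * M)) := by
          exact mul_le_mul_of_nonneg_left h1 h2.le
      _ = α := by field_simp
  -- choose b
  have hcont1 : Continuous fun b : ℂ => ‖Polynomial.eval b (Polynomial.derivative p)‖ :=
    ((Polynomial.derivative p).continuous).norm
  have hcont2 : Continuous fun b : ℂ => ‖Polynomial.eval b p‖ := (p.continuous).norm
  have hcont3 : Continuous fun b : ℂ => ∑ j ∈ Finset.Icc 2 p.natDegree,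
      ‖Polynomial.eval b (Polynomial.hasseDeriv j p)‖ := by
    refine continuous_finset_sum _ fun j _ => ((Polynomial.hasseDeriv j p).continuous).norm
  have hev1 : ∀ᶠ b in 𝓝 ξ, α/2 < ‖Polynomial.eval b (Polynomial.derivative p)‖ := by
    have h0 : α/2 < ‖Polynomial.eval ξ (Polynomial.derivative p)‖ := by
      rw [← hα]; linarith
    exact (hcont1.continuousAt).eventually (eventually_gt_nhds h0)
  have hev2 : ∀ᶠ b in 𝓝 ξ, ‖Polynomial.eval b p‖ < α * β / 4 := by
    have h0 : ‖Polynomial.eval ξ p‖ < α * β / 4 := by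
      rw [hpeval, norm_zero]
      have := mul_pos hαpos hβpos
      linarith
    exact (hcont2.continuousAt).eventually (eventually_lt_nhds h0)
  have hev3 : ∀ᶠ b in 𝓝 ξ, (∑ j ∈ Finset.Icc 2 p.natDegree,
      ‖Polynomial.eval b (Polynomial.hasseDeriv j p)‖) < M :=
    (hcont3.continuousAt).eventually (eventually_lt_nhds (by rw [hM]; linarith))

  obtain ⟨ε, hεpos, hball⟩ := Metric.eventually_nhds_iff.mp ((hev1.and hev2).and hev3)
  obtain ⟨b, hbK, hbnear⟩ := happ (min ε (sep/4)) (lt_min hεpos (by linarith))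
  have hbd : dist b ξ < ε := by
    rw [Complex.dist_eq]
    exact lt_of_lt_of_le hbnear (min_le_left _ _)
  obtain ⟨⟨hb1, hb2⟩, hb3⟩ := hball hbd
  have hbsep : ‖b - ξ‖ < sep / 4 := lt_of_lt_of_le hbnear (min_le_right _ _)
  -- the shifted polynomial
  set q : Polynomial ℂ := (Polynomial.taylor b) p with hq
  have hq1 : q.coeff 1 = Polynomial.eval b (Polynomial.derivative p) := by
    rw [hq]; exact Polynomial.taylor_coeff_one b p
  have hq0 : q.coeff 0 = Polynomial.eval b p := by
    rw [hq]; exact Polynomial.taylor_coeff_zero b p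
  have hqD : q.natDegree = p.natDegree := by rw [hq]; exact Polynomial.natDegree_taylor p b
  have hq1ne : q.coeff 1 ≠ 0 := by
    rw [hq1]
    intro h0
    rw [h0, norm_zero] at hb1
    linarith
  have hq1norm : α/2 < ‖q.coeff 1‖ := by rw [hq1]; exact hb1
  have hqco : ∀ k, q.coeff k ∈ K := by
    intro k
    rw [hq, Polynomial.taylor_coeff]
    refine evalK K ?_ hbK
    intro i
    rw [Polynomial.hasseDeriv_coeff]
    exact K.mul_mem (natCast_mem K _) (hpco _)
  have hqS : (∑ j ∈ Finset.Icc 2 q.natDegree, ‖q.coeff j‖) < M := by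
    rw [hqD]
    calc (∑ j ∈ Finset.Icc 2 p.natDegree, ‖q.coeff j‖)
        = ∑ j ∈ Finset.Icc 2 p.natDegree, ‖Polynomial.eval b (Polynomial.hasseDeriv j p)‖ := by
          refine Finset.sum_congr rfl fun j _ => ?_
          rw [hq, Polynomial.taylor_coeff]
      _ < M := hb3
  have hqSnonneg : 0 ≤ ∑ j ∈ Finset.Icc 2 q.natDegree, ‖q.coeff j‖ :=
    Finset.sum_nonneg fun j _ => norm_nonneg _
  have hinv : ‖q.coeff 1‖⁻¹ ≤ 2 / α := by
    have h2 : (0:ℝ) < α/2 := by linarith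
    calc ‖q.coeff 1‖⁻¹ ≤ (α/2)⁻¹ := inv_anti₀ h2 hq1norm.le
      _ = 2/α := by rw [inv_div]
  have hc1 : ‖q.coeff 1‖⁻¹ * ‖q.coeff 0‖ ≤ β / 2 := by
    have hb2' : ‖q.coeff 0‖ < α * β / 4 := by rw [hq0]; exact hb2
    calc ‖q.coeff 1‖⁻¹ * ‖q.coeff 0‖ ≤ (2/α) * (α * β / 4) := by
          refine mul_le_mul hinv hb2'.le (norm_nonneg _) (div_nonneg (by norm_num) hαpos.le)
      _ = β / 2 := by field_simp; ring
  have hE : ‖q.coeff 1‖⁻¹ * ((∑ j ∈ Finset.Icc 2 q.natDegree, ‖q.coeff j‖) * (16 * β)) ≤ 1 / 2 := by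
    have h16β : (0:ℝ) ≤ 16 * β := by linarith
    calc ‖q.coeff 1‖⁻¹ * ((∑ j ∈ Finset.Icc 2 q.natDegree, ‖q.coeff j‖) * (16 * β))
        ≤ (2/α) * (M * (16 * β)) := by
          refine mul_le_mul hinv ?_ (mul_nonneg hqSnonneg h16β) (div_nonneg (by norm_num) hαpos.le)
          exact mul_le_mul_of_nonneg_right hqS.le h16β
      _ ≤ 1/2 := by
          rw [div_mul_eq_mul_div, div_le_div_iff₀ hαpos (by norm_num)]
          nlinarith
  -- the solution sequence
  set c : ℕ → ℂ := cseq q with hc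
  have hcb : ∀ n, ‖c n‖ ≤ β * ee n := cseq_bound q β hβpos hβ16 hq1ne hc1 hE
  have hcmem : ∀ n, c n ∈ K := cseq_mem K q hqco
  have hsc : Summable (fun n => ‖c n‖) := by
    refine Summable.of_nonneg_of_le (fun n => norm_nonneg _) hcb ?_
    exact (summable_ee).mul_left β
  have hscc : Summable c := hsc.of_norm
  set s : ℂ := ∑' n, c n with hs
  have hs2 : ‖s‖ ≤ 2 * β := by
    rw [hs]
    refine (norm_tsum_le_tsum_norm hsc).trans ?_
    refine Summable.tsum_le_of_sum_range_le hsc fun n => ?_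
    calc ∑ i ∈ Finset.range n, ‖c i‖ ≤ ∑ i ∈ Finset.range n, β * ee i :=
          Finset.sum_le_sum fun i _ => hcb i
      _ = β * ∑ i ∈ Finset.range n, ee i := by rw [Finset.mul_sum]
      _ ≤ β * 2 := by
          refine mul_le_mul_of_nonneg_left ?_ hβpos.le
          calc ∑ i ∈ Finset.range n, ee i ≤ ∑ i ∈ Finset.range (n+1), ee i := by
                refine Finset.sum_le_sum_of_subset_of_nonneg ?_ fun i _ _ => ee_nonneg i
                exact Finset.range_subset_range.mpr (by omega)
            _ ≤ 2 := ee_sum_le n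
      _ = 2 * β := by ring
  set U : PowerSeries ℂ := PowerSeries.mk c with hUdef
  have hNU : NSum U 1 := by
    unfold NSum
    simp only [hUdef, PowerSeries.coeff_mk, norm_one, one_pow, mul_one]
    exact hsc
  have hsumU : sumAt U 1 = s := by
    unfold sumAt
    simp only [hUdef, PowerSeries.coeff_mk, one_pow, mul_one, hs]
  -- evaluate the formal identity at 1
  have hfid := formal_id q hq1ne
  have hqs : q.eval s = 0 := by
    have h1 := congrArg (fun W => sumAt W 1) hfid
    rw [← hUdef] at h1
    rw [sumAt_eval₂C q U 1 hNU, hsumU] at h1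
    have hR : ((1 : PowerSeries ℂ) - PowerSeries.X) * PowerSeries.C (q.coeff 0)
        = (((1 - Polynomial.X) * Polynomial.C (q.coeff 0) : Polynomial ℂ) : PowerSeries ℂ) := by
      rw [Polynomial.coe_mul, Polynomial.coe_sub, Polynomial.coe_one, Polynomial.coe_X,
        Polynomial.coe_C]
    rw [hR, sumAt_coe] at h1
    simpa using h1
  have hps : p.eval (s + b) = 0 := by
    have := Polynomial.taylor_eval b p s
    rw [← hq, hqs] at this
    exact this.symm
  have hclose : ‖(s + b) - ξ‖ < sep := by
    calc ‖(s + b) - ξ‖ = ‖s + (b - ξ)‖ := by ring_nf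
      _ ≤ ‖s‖ + ‖b - ξ‖ := norm_add_le _ _
      _ < 2 * β + sep/4 := by
          refine add_lt_add_of_le_of_lt hs2 hbsep
      _ ≤ sep := by linarith
  have hξeq : s + b = ξ := hroot _ hps hclose
  -- the approximating sequence
  set a : ℕ → ℂ := fun n => b + ∑ k ∈ Finset.range (n+1), c k with ha
  have hamem : ∀ n, a n ∈ K := fun n => K.add_mem hbK (K.sum_mem fun k _ => hcmem k)
  have haten : Tendsto a atTop (𝓝 ξ) := by
    have ht : Tendsto (fun n => ∑ k ∈ Finset.range n, c k) atTop (𝓝 s) :=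
      hscc.hasSum.tendsto_sum_nat
    have ht' : Tendsto (fun n => ∑ k ∈ Finset.range (n+1), c k) atTop (𝓝 s) :=
      ht.comp (tendsto_add_atTop_nat 1)
    have := (tendsto_const_nhds (x := b) (f := atTop (α := ℕ))).add ht'
    rw [show b + s = ξ by rw [← hξeq]; ring] at this
    exact this
  -- the algebraic-series witness polynomial
  set R : Polynomial (Polynomial ℂ) :=
    (∑ i ∈ Finset.range (p.natDegree + 1),
      Polynomial.C (Polynomial.C (p.coeff i) * (1 - Polynomial.X) ^ i) * Polynomial.X ^ i)
    - Polynomial.C ((1 - Polynomial.X) * Polynomial.C (Polynomial.eval b p)) with hRdef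
  have hRcoeff : ∀ m, R.coeff m
      = (if m < p.natDegree + 1 then Polynomial.C (p.coeff m) * (1 - Polynomial.X) ^ m else 0)
        - (if m = 0 then (1 - Polynomial.X) * Polynomial.C (Polynomial.eval b p) else 0) := by
    intro m
    rw [hRdef, Polynomial.coeff_sub, Polynomial.coeff_C,
      coeff_sum_CXpow (p.natDegree + 1) (fun i => Polynomial.C (p.coeff i) * (1 - Polynomial.X) ^ i) m]
  have hXone : (1 - Polynomial.X : Polynomial ℂ) ≠ 0 := by
    intro h
    have := congrArg Polynomial.natDegree (sub_eq_zero.mp h)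
    simp at this
  have hRne : R ≠ 0 := by
    intro h0
    have h1 : R.coeff p.natDegree = 0 := by rw [h0]; simp
    rw [hRcoeff p.natDegree, if_pos (by omega), if_neg (by omega)] at h1
    rw [hmonic.coeff_natDegree, map_one, one_mul, sub_zero] at h1
    exact pow_ne_zero _ hXone h1
  have hRK : ∀ m k, ((R.coeff m).coeff k) ∈ K := by
    intro m k
    rw [hRcoeff m, Polynomial.coeff_sub]
    refine K.sub_mem ?_ ?_
    · split
      · exact polyK_coeff_mul K (fun j => by
          rw [Polynomial.coeff_C]
          split
          · exact hpco m
          · exact K.zero_mem) (polyK_coeff_pow K (polyK_one_sub_X K) m) k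
      · simp only [Polynomial.coeff_zero]
        exact K.zero_mem
    · split
      · refine polyK_coeff_mul K (polyK_one_sub_X K) (fun j => ?_) k
        rw [Polynomial.coeff_C]
        split
        · exact evalK K hpco hbK
        · exact K.zero_mem
      · simp only [Polynomial.coeff_zero]
        exact K.zero_mem
  -- the formal identity for the generating function of a
  have hW : ((1 : PowerSeries ℂ) - PowerSeries.X) * PowerSeries.mk a
      = PowerSeries.C b + U := by
    ext n
    rcases Nat.eq_zero_or_pos n with rfl | hn
    · rw [sub_mul, one_mul, map_sub, map_add, PowerSeries.coeff_zero_X_mul]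
      simp only [PowerSeries.coeff_mk, hUdef, ha, PowerSeries.coeff_C]
      simp [cseq_zero q, ← hc]
    obtain ⟨m, rfl⟩ : ∃ m, n = m + 1 := ⟨n - 1, by omega⟩
    rw [sub_mul, one_mul, map_sub, map_add, PowerSeries.coeff_succ_X_mul]
    simp only [PowerSeries.coeff_mk, hUdef, ha, PowerSeries.coeff_C, if_neg (by omega : ¬ m+1 = 0)]
    rw [Finset.sum_range_succ]
    ring
  have hRid : Polynomial.eval₂ Polynomial.coeToPowerSeries.ringHom (PowerSeries.mk a) R = 0 := by
    rw [hRdef, Polynomial.eval₂_sub, Polynomial.eval₂_finset_sum]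
    simp only [Polynomial.eval₂_mul, Polynomial.eval₂_C, Polynomial.eval₂_X, Polynomial.eval₂_pow,
      Polynomial.coeToPowerSeries.ringHom_apply, Polynomial.coe_mul, Polynomial.coe_pow,
      Polynomial.coe_sub, Polynomial.coe_one, Polynomial.coe_X, Polynomial.coe_C]
    have hterm : ∀ i, (PowerSeries.C (p.coeff i) * (1 - PowerSeries.X) ^ i)
        * (PowerSeries.mk a) ^ i
        = PowerSeries.C (p.coeff i) * ((1 - PowerSeries.X) * PowerSeries.mk a) ^ i := by
      intro i
      rw [mul_pow, mul_assoc]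
    rw [Finset.sum_congr rfl fun i _ => hterm i]
    have hsum : ∑ i ∈ Finset.range (p.natDegree + 1),
        PowerSeries.C (p.coeff i) * ((1 - PowerSeries.X) * PowerSeries.mk a) ^ i
        = Polynomial.eval₂ (PowerSeries.C) ((1 - PowerSeries.X) * PowerSeries.mk a) p :=
      (Polynomial.eval₂_eq_sum_range _ _).symm
    rw [hsum, hW]
    have hcomp : Polynomial.eval₂ (PowerSeries.C) (PowerSeries.C b + U) p
        = Polynomial.eval₂ (PowerSeries.C) U q := by
      rw [hq, Polynomial.taylor_apply, Polynomial.eval₂_comp]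
      congr 1
      rw [Polynomial.eval₂_add, Polynomial.eval₂_X, Polynomial.eval₂_C]
      ring
    rw [hcomp, formal_id q hq1ne, hq0]
    ring
  exact ⟨a, ⟨hamem, R, hRne, hRK, hRid⟩, haten⟩



lemma polyK_of_X_sub_one_mul (K : Subfield ℂ) (g' : Polynomial ℂ)
    (hg : ∀ k, ((Polynomial.X - Polynomial.C 1) * g').coeff k ∈ K) : ∀ k, g'.coeff k ∈ K := by
  intro k
  induction k with
  | zero =>
    have h0 := hg 0
    rw [Polynomial.mul_coeff_zero, Polynomial.coeff_sub, Polynomial.coeff_X_zero,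
      Polynomial.coeff_C_zero, zero_sub, neg_mul] at h0
    have := K.neg_mem h0
    rw [neg_neg] at this
    have h1 : (1:ℂ) * g'.coeff 0 = g'.coeff 0 := one_mul _
    rwa [h1] at this
  | succ k ih =>
    have h0 := hg (k+1)
    rw [sub_mul, Polynomial.coeff_sub, Polynomial.coeff_X_mul] at h0
    have h1 : (Polynomial.C 1 * g').coeff (k+1) = g'.coeff (k+1) := by
      rw [Polynomial.coeff_C_mul, one_mul]
    rw [h1] at h0
    have := K.sub_mem ih h0
    have heq : g'.coeff k - (g'.coeff k - g'.coeff (k + 1)) = g'.coeff (k+1) := by ring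
    rwa [heq] at this

lemma div_step (K : Subfield ℂ) (G : ℂ → ℂ) (L : Filter ℂ) [hLb : L.NeBot]
    (hne1 : ∀ᶠ z in L, z ≠ (1:ℂ)) :
    ∀ N (D : ℕ) (c : ℕ → Polynomial ℂ), (∀ m k, (c m).coeff k ∈ K) → c D ≠ 0 →
      Polynomial.rootMultiplicity 1 (c D) ≤ N →
      (∀ᶠ z in L, ∑ m ∈ Finset.range (D+1), (c m).eval z * G z ^ m = 0) →
      ∃ d : ℕ → Polynomial ℂ, (∀ m k, (d m).coeff k ∈ K) ∧ (∃ m, m ≤ D ∧ (d m).eval 1 ≠ 0) ∧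
        (∀ᶠ z in L, ∑ m ∈ Finset.range (D+1), (d m).eval z * G z ^ m = 0) := by
  intro N
  induction N with
  | zero =>
    intro D c hK hcD hmul hid
    by_cases hex : ∃ m, m ≤ D ∧ (c m).eval 1 ≠ 0
    · exact ⟨c, hK, hex, hid⟩
    · exfalso
      push_neg at hex
      have hroot : (c D).IsRoot 1 := hex D le_rfl
      have := (Polynomial.rootMultiplicity_pos hcD).mpr hroot
      omega
  | succ N ih =>
    intro D c hK hcD hmul hid
    by_cases hex : ∃ m, m ≤ D ∧ (c m).eval 1 ≠ 0
    · exact ⟨c, hK, hex, hid⟩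
    push_neg at hex
    set c' : ℕ → Polynomial ℂ := fun m => c m /ₘ (Polynomial.X - Polynomial.C 1) with hc'
    have hfac : ∀ m ≤ D, (Polynomial.X - Polynomial.C 1) * c' m = c m := by
      intro m hm
      rw [hc']
      exact Polynomial.mul_divByMonic_eq_iff_isRoot.mpr (hex m hm)
    have hKc' : ∀ m, m ≤ D → ∀ k, (c' m).coeff k ∈ K := by
      intro m hm
      refine polyK_of_X_sub_one_mul K (c' m) ?_
      intro k
      rw [hfac m hm]
      exact hK m k
    have hcD' : c' D ≠ 0 := by
      intro h0
      apply hcD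
      rw [← hfac D le_rfl, h0, mul_zero]
    have hmul' : Polynomial.rootMultiplicity 1 (c' D) ≤ N := by
      have hne : (Polynomial.X - Polynomial.C 1) * c' D ≠ 0 := by
        rw [hfac D le_rfl]; exact hcD
      have := Polynomial.rootMultiplicity_mul (x := (1:ℂ)) hne
      rw [hfac D le_rfl] at this
      rw [Polynomial.rootMultiplicity_X_sub_C_self] at this
      omega
    -- replace c' by a version supported on [0, D] with K coefficients everywhere
    set c'' : ℕ → Polynomial ℂ := fun m => if m ≤ D then c' m else 0 with hc''
    have hKc'' : ∀ m k, (c'' m).coeff k ∈ K := by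
      intro m k
      rw [hc'']
      dsimp only
      split
      · exact hKc' m (by assumption) k
      · simp only [Polynomial.coeff_zero]; exact K.zero_mem
    have hcD'' : c'' D ≠ 0 := by
      rw [hc'']; simpa using hcD'
    have hmul'' : Polynomial.rootMultiplicity 1 (c'' D) ≤ N := by
      rw [hc'']; simpa using hmul'
    have hid'' : ∀ᶠ z in L, ∑ m ∈ Finset.range (D+1), (c'' m).eval z * G z ^ m = 0 := by
      filter_upwards [hid, hne1] with z hz hzne
      have hz1 : z - 1 ≠ 0 := sub_ne_zero.mpr hzne
      have hsum : ∑ m ∈ Finset.range (D+1), (c m).eval z * G z ^ m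
          = (z - 1) * ∑ m ∈ Finset.range (D+1), (c'' m).eval z * G z ^ m := by
        rw [Finset.mul_sum]
        refine Finset.sum_congr rfl fun m hm => ?_
        have hmD : m ≤ D := by
          have := Finset.mem_range.mp hm; omega
        rw [← hfac m hmD]
        rw [Polynomial.eval_mul, Polynomial.eval_sub, Polynomial.eval_X, Polynomial.eval_C]
        rw [hc'']
        dsimp only
        rw [if_pos hmD]
        ring
      rw [hsum] at hz
      rcases mul_eq_zero.mp hz with h | h
      · exact absurd h hz1
      · exact h
    exact ih D c'' hKc'' hcD'' hmul'' hid''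


theorem isAlgebraic_of_algLimits (K : Subfield ℂ) {ξ : ℂ} (h : ξ ∈ AlgLimits K) :
    IsAlgebraic K ξ := by
  classical
  obtain ⟨a, ⟨haK, R, hRne, hRK, hRid⟩, hlim⟩ := h
  -- boundedness
  obtain ⟨N0, hN0⟩ := (Metric.tendsto_atTop.mp hlim) 1 one_pos
  set Mb : ℝ := ((Finset.range (N0+1)).image (fun i => ‖a i‖)).max' (by simp) + (‖ξ‖ + 1) with hMb
  have hMbge : ∀ n, ‖a n‖ ≤ Mb := by
    intro n
    rcases le_or_gt n N0 with hn | hn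
    · have h1 : ‖a n‖ ≤ ((Finset.range (N0+1)).image (fun i => ‖a i‖)).max' (by simp) := by
        refine Finset.le_max' _ _ ?_
        exact Finset.mem_image.mpr ⟨n, Finset.mem_range.mpr (by omega), rfl⟩
      have h2 : (0:ℝ) ≤ ‖ξ‖ + 1 := by positivity
      rw [hMb]; linarith
    · have h1 := hN0 n hn.le
      rw [dist_eq_norm] at h1
      have h2 : ‖a n‖ ≤ ‖ξ‖ + 1 := by
        calc ‖a n‖ = ‖(a n - ξ) + ξ‖ := by ring_nf
          _ ≤ ‖a n - ξ‖ + ‖ξ‖ := norm_add_le _ _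
          _ ≤ ‖ξ‖ + 1 := by linarith
      have h3 : (0:ℝ) ≤ ((Finset.range (N0+1)).image (fun i => ‖a i‖)).max' (by simp) := by
        refine le_trans (norm_nonneg (a 0)) ?_
        refine Finset.le_max' _ _ ?_
        exact Finset.mem_image.mpr ⟨0, Finset.mem_range.mpr (by omega), rfl⟩
      rw [hMb]; linarith
  have hNS : ∀ z : ℂ, ‖z‖ < 1 → NSum (PowerSeries.mk a) z := by
    intro z hz
    unfold NSum
    refine Summable.of_nonneg_of_le (fun n => by positivity) (fun n => ?_)
      ((summable_geometric_of_lt_one (norm_nonneg z) hz).mul_left Mb)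
    simp only [PowerSeries.coeff_mk]
    exact mul_le_mul_of_nonneg_right (hMbge n) (by positivity)
  -- the difference sequence and Abel's theorem
  set v : ℕ → ℂ := fun n => Nat.rec (a 0) (fun k _ => a (k+1) - a k) n with hv
  have hv0 : v 0 = a 0 := rfl
  have hvs : ∀ k, v (k+1) = a (k+1) - a k := fun k => rfl
  have hps : ∀ n, ∑ i ∈ Finset.range (n+1), v i = a n := by
    intro n
    induction n with
    | zero => simpa using hv0
    | succ n ih => rw [Finset.sum_range_succ, ih, hvs]; ring
  have hVsum : Tendsto (fun n => ∑ i ∈ Finset.range n, v i) atTop (𝓝 ξ) := by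
    rw [← tendsto_add_atTop_iff_nat 1]
    simpa only [hps] using hlim
  have hAbel := Complex.tendsto_tsum_powerSeries_nhdsWithin_lt hVsum
  set L : Filter ℂ := (𝓝[<] (1:ℝ)).map Complex.ofReal with hL
  haveI : L.NeBot := Filter.map_neBot
  have hevgood : ∀ᶠ z in L, ‖z‖ < 1 ∧ z ≠ 1 := by
    rw [hL, Filter.eventually_map]
    filter_upwards [Ioo_mem_nhdsLT_of_mem (Set.mem_Ioc.mpr ⟨zero_lt_one, le_rfl⟩)] with r hr
    obtain ⟨hr0, hr1⟩ := hr
    constructor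
    · rw [Complex.norm_real, Real.norm_eq_abs, abs_of_pos hr0]
      exact hr1
    · intro hre
      have : r = 1 := by exact_mod_cast hre
      linarith
  have hne1 : ∀ᶠ z in L, z ≠ (1:ℂ) := hevgood.mono fun z hz => hz.2
  -- generating function identities
  have hpoly : (((1 - Polynomial.X : Polynomial ℂ)) : PowerSeries ℂ) = 1 - PowerSeries.X := by
    rw [Polynomial.coe_sub, Polynomial.coe_one, Polynomial.coe_X]
  have hVmk : PowerSeries.mk v = (1 - PowerSeries.X) * PowerSeries.mk a := by
    ext n
    rcases Nat.eq_zero_or_pos n with rfl | hn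
    · rw [sub_mul, one_mul, map_sub, PowerSeries.coeff_zero_X_mul]
      simp [hv0]
    obtain ⟨m, rfl⟩ : ∃ m, n = m + 1 := ⟨n - 1, by omega⟩
    rw [sub_mul, one_mul, map_sub, PowerSeries.coeff_succ_X_mul]
    simp [hvs]
  set G : ℂ → ℂ := fun z => ∑' n, v n * z ^ n with hGdef
  have hGAbel : Tendsto G L (𝓝 ξ) := hAbel
  have hGz : ∀ z : ℂ, ‖z‖ < 1 → G z = (1 - z) * sumAt (PowerSeries.mk a) z := by
    intro z hz
    have h1 : G z = sumAt (PowerSeries.mk v) z := by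
      rw [hGdef]
      unfold sumAt
      simp only [PowerSeries.coeff_mk]
    rw [h1, hVmk, ← hpoly, sumAt_mul (by rw [hpoly]; rw [← hpoly]; exact NSum_coe _ z) (hNS z hz),
      sumAt_coe]
    simp
  set D : ℕ := R.natDegree with hD
  set c0 : ℕ → Polynomial ℂ := fun m => R.coeff m * (1 - Polynomial.X) ^ (D - m) with hc0
  have hgen : ∀ᶠ z in L, ∑ m ∈ Finset.range (D+1), (c0 m).eval z * G z ^ m = 0 := by
    filter_upwards [hevgood] with z hz
    obtain ⟨hz1, _⟩ := hz
    have hbase := congrArg (fun W => sumAt W z) hRid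
    simp only [sumAt_zero] at hbase
    rw [sumAt_eval₂ R (PowerSeries.mk a) z (hNS z hz1)] at hbase
    set f : ℂ := sumAt (PowerSeries.mk a) z with hf
    calc ∑ m ∈ Finset.range (D+1), (c0 m).eval z * G z ^ m
        = (1 - z)^D * ∑ m ∈ Finset.range (D+1), (R.coeff m).eval z * f ^ m := by
          rw [Finset.mul_sum]
          refine Finset.sum_congr rfl fun m hm => ?_
          have hmD : m ≤ D := by have := Finset.mem_range.mp hm; omega
          rw [hc0]
          dsimp only
          rw [Polynomial.eval_mul, Polynomial.eval_pow, Polynomial.eval_sub,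
            Polynomial.eval_one, Polynomial.eval_X, hGz z hz1, ← hf]
          have hDm : (1 - z)^(D - m) * (1 - z)^m = (1 - z)^D := by
            rw [← pow_add]; congr 1; omega
          rw [mul_pow, ← hDm]
          ring
      _ = (1 - z)^D * 0 := by rw [hbase]
      _ = 0 := mul_zero _
  have hc0K : ∀ m k, (c0 m).coeff k ∈ K := by
    intro m k
    rw [hc0]
    exact polyK_coeff_mul K (hRK m) (polyK_coeff_pow K (polyK_one_sub_X K) _) k
  have hc0D : c0 D ≠ 0 := by
    rw [hc0]
    dsimp only
    rw [Nat.sub_self, pow_zero, mul_one]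
    exact Polynomial.leadingCoeff_ne_zero.mpr hRne
  obtain ⟨d, hdK, ⟨m₀, hm₀D, hm₀⟩, hid⟩ :=
    div_step K G L hne1 (Polynomial.rootMultiplicity 1 (c0 D)) D c0 hc0K hc0D le_rfl hgen
  -- take limits
  have hzlim : Tendsto (fun z : ℂ => z) L (𝓝 1) := by
    rw [hL, Filter.tendsto_map'_iff]
    exact (Complex.continuous_ofReal.tendsto 1).mono_left nhdsWithin_le_nhds
  have hlimF : Tendsto (fun z => ∑ m ∈ Finset.range (D+1), (d m).eval z * G z ^ m) L
      (𝓝 (∑ m ∈ Finset.range (D+1), (d m).eval 1 * ξ ^ m)) := by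
    refine tendsto_finset_sum _ fun m _ => Tendsto.mul ?_ (hGAbel.pow m)
    exact ((d m).continuous.tendsto 1).comp hzlim
  have hzero : (∑ m ∈ Finset.range (D+1), (d m).eval 1 * ξ ^ m) = 0 := by
    refine tendsto_nhds_unique hlimF ?_
    exact Filter.Tendsto.congr' (Filter.EventuallyEq.symm hid) tendsto_const_nhds
  -- package into a polynomial over K
  set dd : ℕ → K := fun m => ⟨(d m).eval 1, evalK K (hdK m) K.one_mem⟩ with hdd
  set W : Polynomial K := ∑ m ∈ Finset.range (D+1), Polynomial.C (dd m) * Polynomial.X ^ m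
    with hW
  have hWne : W ≠ 0 := by
    intro h0
    have h1 : W.coeff m₀ = 0 := by rw [h0]; simp
    rw [hW, coeff_sum_CXpow (D+1) dd m₀, if_pos (by omega)] at h1
    apply hm₀
    have := congrArg (Subtype.val) h1
    simpa [hdd] using this
  have hWev : Polynomial.aeval ξ W = 0 := by
    rw [hW, map_sum]
    have : ∀ m, Polynomial.aeval ξ (Polynomial.C (dd m) * Polynomial.X ^ m)
        = (d m).eval 1 * ξ ^ m := by
      intro m
      rw [map_mul, map_pow, Polynomial.aeval_C, Polynomial.aeval_X]
      rfl
    rw [Finset.sum_congr rfl fun m _ => this m]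
    exact hzero
  exact ⟨W, hWne, hWev⟩


lemma isAlg_le {F K : Subfield ℂ} (hFK : F ≤ K) {x : ℂ} (h : IsAlgebraic F x) :
    IsAlgebraic K x := by
  obtain ⟨p, hp, hpx⟩ := h
  refine ⟨p.map (Subfield.inclusion hFK), ?_, ?_⟩
  · intro h0
    apply hp
    have hinj : Function.Injective (Subfield.inclusion hFK) := by
      intro a b hab
      have h2 := congrArg Subtype.val hab
      exact Subtype.ext h2
    exact Polynomial.map_injective _ hinj (by simpa using h0)
  · rw [Polynomial.aeval_def, Polynomial.eval₂_map]
    rw [Polynomial.aeval_def] at hpx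
    have hcomp : (algebraMap K ℂ).comp (Subfield.inclusion hFK) = algebraMap F ℂ :=
      RingHom.ext fun a => rfl
    rw [hcomp]
    exact hpx

lemma isAlg_descend {F K : Subfield ℂ} (hFK : F ≤ K)
    (hKalg : ∀ y : ℂ, y ∈ K → IsAlgebraic F y) {x : ℂ} (h : IsAlgebraic K x) :
    IsAlgebraic F x := by
  letI : Algebra F K := (Subfield.inclusion hFK).toAlgebra
  haveI : IsScalarTower F K ℂ := IsScalarTower.of_algebraMap_eq fun a => rfl
  haveI : Algebra.IsIntegral F K := ⟨fun k => by
    have h1 : IsAlgebraic F ((algebraMap K ℂ) k) := hKalg k k.2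
    have h2 : IsAlgebraic F k :=
      (isAlgebraic_algebraMap_iff (algebraMap K ℂ).injective).mp h1
    exact isAlgebraic_iff_isIntegral.mp h2⟩
  rw [isAlgebraic_iff_isIntegral] at h ⊢
  exact isIntegral_trans x h

lemma isAlg_I (F : Subfield ℂ) : IsAlgebraic F Complex.I := by
  refine ⟨Polynomial.X ^ 2 + Polynomial.C 1, ?_, ?_⟩
  · exact Polynomial.X_pow_add_C_ne_zero (by norm_num) 1
  · rw [Polynomial.aeval_def, Polynomial.eval₂_add, Polynomial.eval₂_pow, Polynomial.eval₂_X,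
      Polynomial.eval₂_C]
    simp [Complex.I_sq]

lemma closure_alg (F : Subfield ℂ) :
    ∀ y : ℂ, y ∈ Subfield.closure ((F : Set ℂ) ∪ {Complex.I}) → IsAlgebraic F y := by
  intro y hy
  induction hy using Subfield.closure_induction with
  | mem x hx =>
    rcases hx with hx | hx
    · exact ⟨Polynomial.X - Polynomial.C ⟨x, hx⟩, Polynomial.X_sub_C_ne_zero _, by
        rw [Polynomial.aeval_def, Polynomial.eval₂_sub, Polynomial.eval₂_X, Polynomial.eval₂_C]
        exact sub_eq_zero.mpr rfl⟩
    · rw [Set.mem_singleton_iff.mp hx]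
      exact isAlg_I F
  | one => exact isAlgebraic_one
  | add x y _ _ hx hy =>
    exact isAlgebraic_iff_isIntegral.mpr
      ((isAlgebraic_iff_isIntegral.mp hx).add (isAlgebraic_iff_isIntegral.mp hy))
  | neg x _ hx =>
    exact isAlgebraic_iff_isIntegral.mpr (isAlgebraic_iff_isIntegral.mp hx).neg
  | inv x _ hx => exact hx.inv
  | mul x y _ _ hx hy =>
    exact isAlgebraic_iff_isIntegral.mpr
      ((isAlgebraic_iff_isIntegral.mp hx).mul (isAlgebraic_iff_isIntegral.mp hy))

lemma isAlg_conj (F : Subfield ℂ) (hF : ∀ x ∈ F, x.im = 0) {x : ℂ}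
    (h : IsAlgebraic F x) : IsAlgebraic F ((starRingEnd ℂ) x) := by
  obtain ⟨p, hp, hpx⟩ := h
  refine ⟨p, hp, ?_⟩
  have hcomm : (starRingEnd ℂ).comp (algebraMap F ℂ) = algebraMap F ℂ := by
    ext a
    exact Complex.conj_eq_iff_im.mpr (hF a a.2)
  have h1 := congrArg (starRingEnd ℂ) hpx
  rw [Polynomial.aeval_def, Polynomial.hom_eval₂, hcomm] at h1
  rw [Polynomial.aeval_def]
  simpa using h1

lemma two_mem (F : Subfield ℂ) : (2:ℂ) ∈ F := by
  have := F.add_mem F.one_mem F.one_mem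
  rw [one_add_one_eq_two] at this
  exact this

lemma isAlg_re (F : Subfield ℂ) (hF : ∀ x ∈ F, x.im = 0) {x : ℂ}
    (h : IsAlgebraic F x) : IsAlgebraic F ((x.re : ℝ) : ℂ) := by
  have hconj := isAlg_conj F hF h
  have h2 : IsAlgebraic F ((2:ℂ)⁻¹) := by
    have hm : (2:ℂ)⁻¹ ∈ F := F.inv_mem (two_mem F)
    have := isAlgebraic_algebraMap (R := F) (A := ℂ) ⟨(2:ℂ)⁻¹, hm⟩
    exact this
  have heq : ((x.re : ℝ) : ℂ) = (x + (starRingEnd ℂ) x) * (2:ℂ)⁻¹ := by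
    rw [Complex.add_conj]
    field_simp
    push_cast; ring
  rw [heq]
  exact isAlgebraic_iff_isIntegral.mpr
    (((isAlgebraic_iff_isIntegral.mp h).add (isAlgebraic_iff_isIntegral.mp hconj)).mul
      (isAlgebraic_iff_isIntegral.mp h2))

lemma isAlg_im (F : Subfield ℂ) (hF : ∀ x ∈ F, x.im = 0) {x : ℂ}
    (h : IsAlgebraic F x) : IsAlgebraic F ((x.im : ℝ) : ℂ) := by
  have hconj := isAlg_conj F hF h
  have hI := isAlg_I F
  have h2I : IsAlgebraic F ((2:ℂ) * Complex.I) := by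
    have h2 : IsAlgebraic F (2:ℂ) := by
      have := isAlgebraic_algebraMap (R := F) (A := ℂ) ⟨(2:ℂ), two_mem F⟩
      exact this
    exact isAlgebraic_iff_isIntegral.mpr
      ((isAlgebraic_iff_isIntegral.mp h2).mul (isAlgebraic_iff_isIntegral.mp hI))
  have heq : ((x.im : ℝ) : ℂ) = (x - (starRingEnd ℂ) x) * ((2:ℂ) * Complex.I)⁻¹ := by
    rw [Complex.sub_conj]
    have hIne : (2:ℂ) * Complex.I ≠ 0 := by
      simp [Complex.I_ne_zero]
    field_simp
    push_cast
    ring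
  rw [heq]
  refine isAlgebraic_iff_isIntegral.mpr (IsIntegral.mul ?_ ?_)
  · exact isAlgebraic_iff_isIntegral.mp (isAlgebraic_iff_isIntegral.mpr
      ((isAlgebraic_iff_isIntegral.mp h).sub (isAlgebraic_iff_isIntegral.mp hconj)))
  · exact isAlgebraic_iff_isIntegral.mp h2I.inv


lemma algLimits_im_zero (F : Subfield ℂ) (hF : ∀ x ∈ F, x.im = 0) {x : ℂ}
    (h : x ∈ AlgLimits F) : x.im = 0 := by
  obtain ⟨a, ⟨haF, _⟩, hlim⟩ := h
  have h1 : Tendsto (fun n => (a n).im) atTop (𝓝 x.im) :=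
    (Complex.continuous_im.tendsto x).comp hlim
  have h2 : (fun n => (a n).im) = fun _ => (0:ℝ) := funext fun n => hF _ (haF n)
  rw [h2] at h1
  exact tendsto_nhds_unique h1 tendsto_const_nhds

lemma happ_real (F : Subfield ℂ) {x : ℂ} (hx : x.im = 0) :
    ∀ ε : ℝ, 0 < ε → ∃ b ∈ F, ‖b - x‖ < ε := by
  intro ε hε
  obtain ⟨q, hq⟩ := exists_rat_near x.re hε
  refine ⟨(q : ℂ), SubfieldClass.ratCast_mem F q, ?_⟩
  have hxq : x = ((x.re : ℝ) : ℂ) := by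
    exact (Complex.ext (by simp) (by simp [hx])).symm
  rw [hxq]
  rw [show ((q:ℂ) - ((x.re:ℝ):ℂ)) = (((q:ℝ) - x.re : ℝ) : ℂ) by push_cast; ring]
  rw [Complex.norm_real, Real.norm_eq_abs, abs_sub_comm]
  exact hq

lemma happ_closure (F : Subfield ℂ) (x : ℂ) :
    ∀ ε : ℝ, 0 < ε →
      ∃ b ∈ Subfield.closure ((F : Set ℂ) ∪ {Complex.I}), ‖b - x‖ < ε := by
  intro ε hε
  obtain ⟨q1, hq1⟩ := exists_rat_near x.re (by linarith : (0:ℝ) < ε/2)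
  obtain ⟨q2, hq2⟩ := exists_rat_near x.im (by linarith : (0:ℝ) < ε/2)
  set K := Subfield.closure ((F : Set ℂ) ∪ {Complex.I}) with hK
  have hIK : Complex.I ∈ K := Subfield.subset_closure (Set.mem_union_right _ rfl)
  refine ⟨(q1 : ℂ) + (q2 : ℂ) * Complex.I,
    K.add_mem (SubfieldClass.ratCast_mem K q1) (K.mul_mem (SubfieldClass.ratCast_mem K q2) hIK), ?_⟩
  have hx : x = ((x.re : ℝ) : ℂ) + ((x.im : ℝ) : ℂ) * Complex.I := (Complex.re_add_im x).symm
  calc ‖(q1 : ℂ) + (q2 : ℂ) * Complex.I - x‖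
      = ‖(((q1:ℝ) - x.re : ℝ) : ℂ) + (((q2:ℝ) - x.im : ℝ) : ℂ) * Complex.I‖ := by
        congr 1
        nth_rewrite 1 [hx]
        push_cast
        ring
    _ ≤ ‖(((q1:ℝ) - x.re : ℝ) : ℂ)‖ + ‖(((q2:ℝ) - x.im : ℝ) : ℂ) * Complex.I‖ := norm_add_le _ _
    _ = |(q1:ℝ) - x.re| + |(q2:ℝ) - x.im| := by
        rw [norm_mul, Complex.norm_I, mul_one, Complex.norm_real, Complex.norm_real,
          Real.norm_eq_abs, Real.norm_eq_abs]
    _ < ε/2 + ε/2 := by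
        rw [abs_sub_comm ((q1:ℝ)) x.re, abs_sub_comm ((q2:ℝ)) x.im]
        exact add_lt_add hq1 hq2
    _ = ε := by ring


theorem algLimits_adjoin_i (F : Subfield ℂ) (hF : ∀ x ∈ F, x.im = 0) :
    {x : ℂ | IsAlgebraic F x} =
      AlgLimits (Subfield.closure ((F : Set ℂ) ∪ {Complex.I})) ∧
    AlgLimits (Subfield.closure ((F : Set ℂ) ∪ {Complex.I})) =
      {x : ℂ | ∃ a ∈ AlgLimits F, ∃ b ∈ AlgLimits F, x = a + Complex.I * b} := by
  set K := Subfield.closure ((F : Set ℂ) ∪ {Complex.I}) with hK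
  have hFK : F ≤ K := fun x hx => Subfield.subset_closure (Set.mem_union_left _ hx)
  have heq1 : {x : ℂ | IsAlgebraic F x} = AlgLimits K := by
    ext x
    constructor
    · intro hx
      exact mem_algLimits K x (isAlg_le hFK hx) (happ_closure F x)
    · intro hx
      exact isAlg_descend hFK (closure_alg F) (isAlgebraic_of_algLimits K hx)
  refine ⟨heq1, ?_⟩
  ext x
  constructor
  · intro hx
    have halgF : IsAlgebraic F x := by
      rw [← heq1] at hx
      exact hx
    have hre := isAlg_re F hF halgF
    have him := isAlg_im F hF halgF
    refine ⟨((x.re : ℝ) : ℂ), ?_, ((x.im : ℝ) : ℂ), ?_, ?_⟩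
    · exact mem_algLimits F _ hre (happ_real F (by simp))
    · exact mem_algLimits F _ him (happ_real F (by simp))
    · rw [mul_comm]
      exact (Complex.re_add_im x).symm
  · rintro ⟨u, hu, w, hw, rfl⟩
    have hualg : IsAlgebraic F u := isAlgebraic_of_algLimits F hu
    have hwalg : IsAlgebraic F w := isAlgebraic_of_algLimits F hw
    have halg : IsAlgebraic F (u + Complex.I * w) := by
      refine isAlgebraic_iff_isIntegral.mpr ?_
      refine (isAlgebraic_iff_isIntegral.mp hualg).add ?_
      exact (isAlgebraic_iff_isIntegral.mp (isAlg_I F)).mul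
        (isAlgebraic_iff_isIntegral.mp hwalg)
    exact mem_algLimits K _ (isAlg_le hFK halg) (happ_closure F _)


end
end

section
/- For any subfield F of ℂ, the set of limits of convergent sequences in F^ℕ satisfying a linear recurrence with constant coefficients in F equals F itself. -/
open Filter Topology Polynomial

/-- A sequence is C-finite over : nonzero linear recurrence with constant
coefficients in . -/
def IsCFiniteOver (F : Subfield ℂ) (a : ℕ → ℂ) : Prop :=
  ∃ r : ℕ, ∃ c : Fin (r + 1) → ℂ,
    (∀ j, c j ∈ F) ∧ c (Fin.last r) ≠ 0 ∧
    ∀ n : ℕ, ∑ j : Fin (r + 1), c j * a (n + (j : ℕ)) = 0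

private lemma tendsto_aux (a : ℕ → ℂ) (ξ : ℂ) (h : Tendsto a atTop (𝓝 ξ))
    (k : ℕ) (q : ℕ → ℂ) :
    Tendsto (fun n => ∑ j ∈ Finset.range k, q j * a (n + j)) atTop
      (𝓝 ((∑ j ∈ Finset.range k, q j) * ξ)) := by
  rw [Finset.sum_mul]
  exact tendsto_finset_sum _ fun j _ =>
    ((h.comp (tendsto_add_atTop_nat j)).const_mul _)

private lemma key (F : Subfield ℂ) : ∀ (r : ℕ) (c a : ℕ → ℂ) (ξ : ℂ),
    (∀ j, c j ∈ F) → c r ≠ 0 → (∀ n, a n ∈ F) →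
    (∀ n, ∑ j ∈ Finset.range (r + 1), c j * a (n + j) = 0) →
    Tendsto a atTop (𝓝 ξ) → ξ ∈ F := by
  intro r
  induction r with
  | zero =>
    intro c a ξ hc hcr _ hrec hlim
    have ha0 : ∀ n, a n = 0 := by
      intro n
      have := hrec n
      simp only [zero_add, Finset.sum_range_one, add_zero] at this
      exact (mul_eq_zero.mp this).resolve_left hcr
    have h0 : Tendsto a atTop (𝓝 (0 : ℂ)) := by
      have : a = fun _ => (0 : ℂ) := funext ha0
      rw [this]; exact tendsto_const_nhds
    have hξ : ξ = 0 := tendsto_nhds_unique hlim h0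
    exact hξ ▸ F.zero_mem
  | succ m ih =>
    intro c a ξ hc hcr ha hrec hlim
    set S : ℂ := ∑ j ∈ Finset.range (m + 2), c j with hSdef
    have hrecl : Tendsto (fun n => ∑ j ∈ Finset.range (m + 2), c j * a (n + j))
        atTop (𝓝 (S * ξ)) := tendsto_aux a ξ hlim (m + 2) c
    have hSξ : S * ξ = 0 := by
      have : (fun n => ∑ j ∈ Finset.range (m + 2), c j * a (n + j))
          = fun _ : ℕ => (0 : ℂ) := funext hrec
      rw [this] at hrecl
      exact tendsto_nhds_unique hrecl tendsto_const_nhds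
    by_cases hS : S = 0
    · -- factor out (x - 1)
      set Q : ℕ → ℂ := fun j => -∑ i ∈ Finset.range j, c i with hQdef
      have hQc : ∀ j, c j = Q j - Q (j + 1) := by
        intro j
        simp only [hQdef, Finset.sum_range_succ]
        ring
      have hQF : ∀ j, Q j ∈ F := fun j => F.neg_mem (F.sum_mem fun i _ => hc i)
      have hQ0 : Q 0 = 0 := by simp [hQdef]
      have hQtop : Q (m + 2) = 0 := by
        simp only [hQdef]
        rw [← hSdef] at *
        simp [hS, hSdef]
      have hQlast : Q (m + 1) = c (m + 1) := by
        have := hQc (m + 1)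
        rw [hQtop] at this
        simpa using this.symm
      set d : ℕ → ℂ := fun n => ∑ j ∈ Finset.range (m + 1), Q (j + 1) * a (n + j)
        with hddef
      have hid : ∀ n, d (n + 1) - d n = ∑ j ∈ Finset.range (m + 2), c j * a (n + j) := by
        intro n
        have h1 : ∑ j ∈ Finset.range (m + 2), Q j * a (n + j) = d (n + 1) := by
          rw [Finset.sum_range_succ' (fun j => Q j * a (n + j)) (m + 1)]
          simp only [hQ0, zero_mul, add_zero, hddef]
          refine Finset.sum_congr rfl fun j _ => ?_
          rw [show n + (j + 1) = n + 1 + j by omega]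
        have h2 : ∑ j ∈ Finset.range (m + 2), Q (j + 1) * a (n + j) = d n := by
          rw [Finset.sum_range_succ (fun j => Q (j + 1) * a (n + j)) (m + 1)]
          simp [hQtop, hddef]
        calc d (n + 1) - d n
            = ∑ j ∈ Finset.range (m + 2), Q j * a (n + j)
              - ∑ j ∈ Finset.range (m + 2), Q (j + 1) * a (n + j) := by rw [h1, h2]
          _ = ∑ j ∈ Finset.range (m + 2), (Q j - Q (j + 1)) * a (n + j) := by
              rw [← Finset.sum_sub_distrib]
              exact Finset.sum_congr rfl fun j _ => by ring
          _ = ∑ j ∈ Finset.range (m + 2), c j * a (n + j) :=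
              Finset.sum_congr rfl fun j _ => by rw [← hQc j]
      have hdconst : ∀ n, d n = d 0 := by
        intro n
        induction n with
        | zero => rfl
        | succ k ihk =>
          have := hid k
          rw [hrec k] at this
          have : d (k + 1) = d k := by linear_combination this
          rw [this, ihk]
      set T : ℂ := ∑ j ∈ Finset.range (m + 1), Q (j + 1) with hTdef
      have hdlim : Tendsto d atTop (𝓝 (T * ξ)) :=
        tendsto_aux a ξ hlim (m + 1) (fun j => Q (j + 1))
      have hTξ : T * ξ = d 0 := by
        have hconst : Tendsto d atTop (𝓝 (d 0)) := by
          have : d = fun _ => d 0 := funext hdconst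
          rw [this]; exact tendsto_const_nhds
        exact tendsto_nhds_unique hdlim hconst
      have hTF : T ∈ F := F.sum_mem fun j _ => hQF (j + 1)
      have hd0F : d 0 ∈ F := F.sum_mem fun j _ => F.mul_mem (hQF (j + 1)) (ha _)
      by_cases hT : T = 0
      · -- d 0 = 0, so a satisfies the shorter recurrence given by Q (· + 1)
        have hd00 : d 0 = 0 := by rw [← hTξ, hT, zero_mul]
        have hrec' : ∀ n, ∑ j ∈ Finset.range (m + 1), Q (j + 1) * a (n + j) = 0 := by
          intro n
          have := hdconst n
          rw [hd00] at this
          exact this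
        have hQm : Q (m + 1) ≠ 0 := by rw [hQlast]; exact hcr
        exact ih (fun j => Q (j + 1)) a ξ (fun j => hQF (j + 1)) hQm ha hrec' hlim
      · have : ξ = d 0 / T := by field_simp; linear_combination hTξ
        rw [this]
        exact F.div_mem hd0F hTF
    · have hξ : ξ = 0 := (mul_eq_zero.mp hSξ).resolve_left hS
      exact hξ ▸ F.zero_mem

theorem cfinite_limits_eq (F : Subfield ℂ) :
    {ξ : ℂ | ∃ a : ℕ → ℂ, (∀ n, a n ∈ F) ∧ IsCFiniteOver F a ∧
      Tendsto a atTop (𝓝 ξ)} = (F : Set ℂ) := by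
  ext ξ
  simp only [Set.mem_setOf_eq, SetLike.mem_coe]
  constructor
  · rintro ⟨a, haF, ⟨r, c, hcF, hcr, hrec⟩, hlim⟩
    set c' : ℕ → ℂ := fun j => if h : j < r + 1 then c ⟨j, h⟩ else 0 with hc'def
    have hc'F : ∀ j, c' j ∈ F := by
      intro j
      by_cases h : j < r + 1
      · simp only [hc'def, dif_pos h]; exact hcF _
      · simp only [hc'def, dif_neg h]; exact F.zero_mem
    have hc'r : c' r ≠ 0 := by
      have : c' r = c (Fin.last r) := by simp [hc'def, Fin.last]
      rw [this]; exact hcr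
    have hrec' : ∀ n, ∑ j ∈ Finset.range (r + 1), c' j * a (n + j) = 0 := by
      intro n
      rw [Finset.sum_range fun j => c' j * a (n + j)]
      rw [← hrec n]
      refine Finset.sum_congr rfl fun j _ => ?_
      simp [hc'def, j.isLt, not_lt.mpr (Fin.is_le j)]
    exact key F r c' a ξ hc'F hc'r haF hrec' hlim
  · intro hξ
    refine ⟨fun _ => ξ, fun _ => hξ, ⟨1, ![1, -1], ?_, ?_, ?_⟩, tendsto_const_nhds⟩
    · intro j
      fin_cases j
      · exact F.one_mem
      · exact F.neg_mem F.one_mem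
    · simp [Fin.last]
    · intro n
      simp [Fin.sum_univ_two]
end

section
/- Let R be a subring of ℂ and F a subfield of ℂ. Then the set D_{R,F} of D-finite numbers with respect to R and F is a subring of ℂ. Moreover, if R is an F-algebra then D_{R,F} is an F-algebra. -/
set_option maxHeartbeats 1000000
set_option synthInstance.maxHeartbeats 400000


open Filter Topology Polynomial

noncomputable section
namespace DFAux

abbrev G : Type := Filter.Germ (atTop : Filter ℕ) ℂ

/-- shift by k as a ring hom on germs -/
def Sk (k : ℕ) : G →+* G where
  toFun g := g.compTendsto (· + k) (tendsto_add_atTop_nat k)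
  map_one' := rfl
  map_mul' f g := Filter.Germ.inductionOn₂ f g fun f g => rfl
  map_zero' := rfl
  map_add' f g := Filter.Germ.inductionOn₂ f g fun f g => rfl

@[simp] lemma Sk_coe (k : ℕ) (a : ℕ → ℂ) : Sk k ↑a = ↑(fun n => a (n + k)) := rfl

lemma Sk_Sk (j t : ℕ) (g : G) : Sk t (Sk j g) = Sk (j + t) g := by
  induction g using Filter.Germ.inductionOn with
  | _ f => show (↑(fun n => f (n + t + j)) : G) = ↑(fun n => f (n + (j + t)))
           exact congrArg _ (funext fun n => by ring_nf)

variable (F : Subfield ℂ)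

/-- evaluation of a polynomial over F at ℕ-points, as a germ -/
def phi : Polynomial F →+* G :=
  ((Filter.Germ.coeRingHom _).comp (Pi.ringHom fun n : ℕ => Polynomial.evalRingHom (n : ℂ))).comp
    (Polynomial.mapRingHom (F.subtype : F →+* ℂ))

@[simp] lemma phi_apply (p : Polynomial F) :
    phi F p = ↑(fun n : ℕ => (p.map (F.subtype : F →+* ℂ)).eval (n : ℂ)) := rfl

lemma isUnit_phi {p : Polynomial F} (hp : p ≠ 0) : IsUnit (phi F p) := by
  set q := p.map (F.subtype : F →+* ℂ) with hq
  have hq0 : q ≠ 0 := by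
    simpa [hq, Polynomial.map_eq_zero_iff F.subtype.injective] using hp
  have hfin : {n : ℕ | q.eval (n : ℂ) = 0}.Finite := by
    have : {x : ℂ | q.IsRoot x}.Finite := Polynomial.finite_setOf_isRoot hq0
    exact Set.Finite.preimage (Set.injOn_of_injective (fun a b => by exact_mod_cast id)) this
  have hev : ∀ᶠ n : ℕ in atTop, q.eval (n : ℂ) ≠ 0 := by
    rw [← Nat.cofinite_eq_atTop]
    exact Set.Finite.eventually_cofinite_notMem hfin
  apply IsUnit.of_mul_eq_one (↑(fun n : ℕ => (q.eval (n : ℂ))⁻¹) : G)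
  change (↑((fun n : ℕ => q.eval (n:ℂ)) * (fun n : ℕ => (q.eval (n:ℂ))⁻¹)) : G) = ((1 : ℕ → ℂ) : G)
  exact Filter.Germ.coe_eq.2 (hev.mono fun n hn => by simp [mul_inv_cancel₀ hn])

abbrev K := RatFunc F

def psi : K F →+* G :=
  IsLocalization.lift (M := nonZeroDivisors (Polynomial F)) (g := phi F)
    (fun y => isUnit_phi F (nonZeroDivisors.ne_zero y.2))

@[simp] lemma psi_algebraMap (p : Polynomial F) :
    psi F (algebraMap (Polynomial F) (K F) p) = phi F p :=
  IsLocalization.lift_eq _ _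

def algK : Algebra (K F) G := (psi F).toAlgebra

attribute [local instance] algK

lemma smul_def (c : K F) (g : G) : c • g = psi F c * g := rfl

end DFAux

namespace DFAux
variable (F : Subfield ℂ)
attribute [local instance] algK

/-- composition with X + k as ring hom -/
def tau (k : ℕ) : Polynomial F →+* Polynomial F :=
  Polynomial.eval₂RingHom Polynomial.C (Polynomial.X + Polynomial.C (k : F))

lemma tau_apply (k : ℕ) (p : Polynomial F) :
    tau F k p = p.comp (Polynomial.X + Polynomial.C (k : F)) := rfl

lemma tau_injective (k : ℕ) : Function.Injective (tau F k) := by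
  intro p q h
  have h2 := congrArg (fun r : Polynomial F => r.comp (Polynomial.X - Polynomial.C (k : F))) h
  simpa [tau_apply, Polynomial.comp_assoc, Polynomial.add_comp, Polynomial.sub_comp] using h2

lemma tau_ne_zero (k : ℕ) {p : Polynomial F} (hp : p ≠ 0) : tau F k p ≠ 0 := by
  intro h
  exact hp (tau_injective F k (by simpa using h))

/-- the shift automorphism on rational functions -/
def sigma (k : ℕ) : K F →+* K F :=
  IsLocalization.lift (M := nonZeroDivisors (Polynomial F))
    (g := (algebraMap (Polynomial F) (K F)).comp (tau F k))
    (fun y => by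
      refine isUnit_iff_ne_zero.2 ?_
      have : tau F k (y : Polynomial F) ≠ 0 := tau_ne_zero F k (nonZeroDivisors.ne_zero y.2)
      simpa [map_eq_zero_iff _ (IsFractionRing.injective (Polynomial F) (K F))] using this)

@[simp] lemma sigma_algebraMap (k : ℕ) (p : Polynomial F) :
    sigma F k (algebraMap (Polynomial F) (K F) p) = algebraMap (Polynomial F) (K F) (tau F k p) :=
  IsLocalization.lift_eq _ _

lemma sigma_injective (k : ℕ) : Function.Injective (sigma F k) :=
  (sigma F k).injective

lemma Sk_phi (k : ℕ) (p : Polynomial F) : Sk k (phi F p) = phi F (tau F k p) := by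
  rw [phi_apply, phi_apply, Sk_coe]
  refine congrArg _ (funext fun n => ?_)
  rw [tau_apply, Polynomial.map_comp]
  simp [Polynomial.eval_comp]

lemma Sk_psi (k : ℕ) (c : K F) : Sk k (psi F c) = psi F (sigma F k c) := by
  have : (Sk k).comp (psi F) = (psi F).comp (sigma F k) := by
    refine IsLocalization.ringHom_ext (nonZeroDivisors (Polynomial F)) ?_
    refine RingHom.ext fun p => ?_
    simp only [RingHom.comp_apply, psi_algebraMap, sigma_algebraMap, Sk_phi]
  exact DFunLike.congr_fun this c

lemma Sk_smul (k : ℕ) (c : K F) (g : G) : Sk k (c • g) = sigma F k c • Sk k g := by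
  rw [smul_def, smul_def, map_mul, Sk_psi]

end DFAux

namespace DFAux
variable (F : Subfield ℂ)
attribute [local instance] algK

def Good (g : G) : Prop :=
  ∃ s : Finset G, ∀ k : ℕ, Sk k g ∈ Submodule.span (K F) (s : Set G)

lemma toF (p : Polynomial ℂ) (h : ∀ k, p.coeff k ∈ F) :
    ∃ q : Polynomial F, q.map (F.subtype : F →+* ℂ) = p := by
  refine ⟨p.toSubring F.toSubring ?_, ?_⟩
  · intro x hx
    obtain ⟨k, -, rfl⟩ := Polynomial.mem_coeffs_iff.1 (by exact_mod_cast hx)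
    exact h k
  · exact p.map_toSubring F.toSubring _

lemma coe_sum {ι : Type*} (s : Finset ι) (f : ι → ℕ → ℂ) :
    (∑ i ∈ s, (↑(f i) : G)) = ↑(∑ i ∈ s, f i) := by
  classical
  induction s using Finset.induction with
  | empty => rfl
  | insert _ _ h ih =>
    rw [Finset.sum_insert h, Finset.sum_insert h, ih]
    rfl

lemma good_of_rec (a : ℕ → ℂ) (h : IsPRecursiveOver F a) : Good F ↑a := by
  classical
  obtain ⟨r, p, hco, hlast, hrec⟩ := h
  choose q hqmap using fun j => toF F (p j) (hco j)
  have hqlast : q (Fin.last r) ≠ 0 := by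
    intro h0
    exact hlast (by rw [← hqmap]; simp [h0])
  have master : ∑ j : Fin (r+1), phi F (q j) * Sk (j : ℕ) (↑a : G) = 0 := by
    have h1 : ∀ j : Fin (r+1), phi F (q j) * Sk (j : ℕ) (↑a : G)
        = ↑(fun n : ℕ => (p j).eval (n:ℂ) * a (n + (j:ℕ))) := by
      intro j
      rw [phi_apply, hqmap, Sk_coe]
      rfl
    rw [Finset.sum_congr rfl (fun j _ => h1 j), coe_sum]
    have h2 : (∑ j : Fin (r+1), fun n : ℕ => (p j).eval (n:ℂ) * a (n + (j:ℕ)))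
        = (0 : ℕ → ℂ) := funext fun n => by simpa [Finset.sum_apply] using hrec n
    rw [h2]
    rfl
  refine ⟨Finset.univ.image fun i : Fin r => Sk (i:ℕ) (↑a : G), fun k => ?_⟩
  induction k using Nat.strong_induction_on with
  | _ k ih =>
  by_cases hk : k < r
  · exact Submodule.subset_span (by simp only [Finset.coe_image, Finset.coe_univ,
      Set.image_univ, Set.mem_range]; exact ⟨⟨k, hk⟩, rfl⟩)
  · set t := k - r with ht
    have hk' : k = r + t := by omega
    have E := congrArg (Sk t) master
    rw [map_sum, map_zero] at E
    have E2 : ∑ j : Fin (r+1), phi F (tau F t (q j)) * Sk ((j:ℕ) + t) (↑a:G) = 0 := by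
      rw [← E]
      refine Finset.sum_congr rfl fun j _ => ?_
      rw [map_mul, Sk_phi, Sk_Sk]
    rw [Fin.sum_univ_castSucc] at E2
    simp only [Fin.coe_castSucc, Fin.val_last] at E2
    set L : Polynomial F := tau F t (q (Fin.last r)) with hL
    have hL0 : L ≠ 0 := tau_ne_zero F t hqlast
    set c : K F := (algebraMap (Polynomial F) (K F) L)⁻¹ with hc
    have hcu : psi F c * phi F L = 1 := by
      rw [← psi_algebraMap, ← map_mul, hc, inv_mul_cancel₀, map_one]
      simpa [map_eq_zero_iff _ (IsFractionRing.injective (Polynomial F) (K F))] using hL0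
    have h4 : phi F L * Sk (r + t) (↑a:G)
        = -∑ j : Fin r, phi F (tau F t (q j.castSucc)) * Sk ((j:ℕ) + t) (↑a:G) :=
      eq_neg_of_add_eq_zero_right E2
    have h3 : Sk k (↑a:G) = c • -(∑ j : Fin r, phi F (tau F t (q j.castSucc)) * Sk ((j:ℕ) + t) (↑a:G)) := by
      rw [smul_def]
      calc Sk k (↑a:G) = 1 * Sk (r+t) (↑a:G) := by rw [hk', one_mul]
        _ = (psi F c * phi F L) * Sk (r+t) (↑a:G) := by rw [hcu]
        _ = psi F c * (phi F L * Sk (r+t) (↑a:G)) := mul_assoc _ _ _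
        _ = _ := by rw [h4]
    rw [h3]
    refine Submodule.smul_mem _ _ (Submodule.neg_mem _ (Submodule.sum_mem _ fun j _ => ?_))
    have h5 : phi F (tau F t (q j.castSucc)) * Sk ((j:ℕ) + t) (↑a:G)
        = (algebraMap (Polynomial F) (K F) (tau F t (q j.castSucc))) • Sk ((j:ℕ) + t) (↑a:G) := by
      rw [smul_def, psi_algebraMap]
    rw [h5]
    exact Submodule.smul_mem _ _ (ih ((j:ℕ) + t) (by omega))

end DFAux

namespace DFAux
open scoped Pointwise
variable (F : Subfield ℂ)
attribute [local instance] algK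

lemma algMap_ne_zero {p : Polynomial F} (hp : p ≠ 0) :
    algebraMap (Polynomial F) (K F) p ≠ 0 := by
  simpa [map_eq_zero_iff _ (IsFractionRing.injective (Polynomial F) (K F))] using hp

lemma good_add (g h : G) (hg : Good F g) (hh : Good F h) : Good F (g + h) := by
  classical
  obtain ⟨s, hs⟩ := hg
  obtain ⟨t, ht⟩ := hh
  refine ⟨s ∪ t, fun k => ?_⟩
  rw [map_add]
  exact add_mem
    (Submodule.span_mono (Finset.coe_subset.2 Finset.subset_union_left) (hs k))
    (Submodule.span_mono (Finset.coe_subset.2 Finset.subset_union_right) (ht k))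

lemma good_mul (g h : G) (hg : Good F g) (hh : Good F h) : Good F (g * h) := by
  classical
  obtain ⟨s, hs⟩ := hg
  obtain ⟨t, ht⟩ := hh
  refine ⟨s * t, fun k => ?_⟩
  rw [map_mul]
  have h1 := Submodule.mul_mem_mul (hs k) (ht k)
  rwa [Submodule.span_mul_span, ← Finset.coe_mul] at h1

lemma rec_of_good (a : ℕ → ℂ) (hg : Good F ↑a) : IsPRecursiveOver F a := by
  classical
  obtain ⟨s, hs⟩ := hg
  set m := s.card with hm
  set W := Submodule.span (K F) (s : Set G) with hW
  haveI : FiniteDimensional (K F) W := FiniteDimensional.span_of_finite _ s.finite_toSet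
  have hdim : Module.finrank (K F) W ≤ m := finrank_span_finset_le_card s
  have hnli : ¬ LinearIndependent (K F) (fun i : Fin (m+1) => (⟨Sk (i:ℕ) ↑a, hs i⟩ : W)) := by
    intro hli
    have h8 := hli.fintype_card_le_finrank
    rw [Fintype.card_fin] at h8
    omega
  obtain ⟨c, hc0, i0, hci0⟩ := Fintype.not_linearIndependent_iff.1 hnli
  have hcG : ∑ i : Fin (m+1), c i • Sk (i:ℕ) (↑a:G) = 0 := by
    have h7 := congrArg (W.subtype) hc0
    rw [map_sum, map_zero] at h7
    simpa using h7
  -- clear denominators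
  set d : Fin (m+1) → Polynomial F := fun i => (c i).denom with hd
  have hd0 : ∀ i, d i ≠ 0 := fun i => RatFunc.denom_ne_zero _
  set D : Polynomial F := ∏ i, d i with hD
  set qq : Fin (m+1) → Polynomial F :=
    fun i => (c i).num * ∏ j ∈ Finset.univ.erase i, d j with hqq
  have key : ∀ i, algebraMap (Polynomial F) (K F) (qq i)
      = algebraMap (Polynomial F) (K F) D * c i := by
    intro i
    have h1 : algebraMap (Polynomial F) (K F) ((c i).num)
        = c i * algebraMap (Polynomial F) (K F) ((c i).denom) :=
      (div_eq_iff (algMap_ne_zero F (hd0 i))).1 (RatFunc.num_div_denom (c i))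
    have h2 : D = d i * ∏ j ∈ Finset.univ.erase i, d j :=
      (Finset.mul_prod_erase _ _ (Finset.mem_univ i)).symm
    rw [hqq, map_mul, h1, h2, map_mul]
    ring
  have hqq0 : qq i0 ≠ 0 := by
    refine mul_ne_zero (RatFunc.num_ne_zero hci0) ?_
    exact Finset.prod_ne_zero_iff.2 fun j _ => hd0 j
  -- germ relation with polynomial coefficients
  have hrel : ∑ i : Fin (m+1), phi F (qq i) * Sk (i:ℕ) (↑a:G) = 0 := by
    have h3 : ∀ i : Fin (m+1), phi F (qq i) * Sk (i:ℕ) (↑a:G)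
        = psi F (algebraMap (Polynomial F) (K F) D) * (c i • Sk (i:ℕ) (↑a:G)) := by
      intro i
      rw [smul_def, ← mul_assoc, ← map_mul, ← key i, psi_algebraMap]
    rw [Finset.sum_congr rfl fun i _ => h3 i, ← Finset.mul_sum, hcG, mul_zero]
  -- to an eventual statement
  have hE : ∀ᶠ (n : ℕ) in atTop, ∑ i : Fin (m+1),
      ((qq i).map (F.subtype : F →+* ℂ)).eval (n:ℂ) * a (n + (i:ℕ)) = 0 := by
    have h4 : ∀ i : Fin (m+1), phi F (qq i) * Sk (i:ℕ) (↑a:G)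
        = ↑(fun n : ℕ => ((qq i).map (F.subtype : F →+* ℂ)).eval (n:ℂ) * a (n + (i:ℕ))) := by
      intro i; rfl
    rw [Finset.sum_congr rfl fun i _ => h4 i, coe_sum] at hrel
    have h5 := Filter.Germ.coe_eq.1 hrel
    filter_upwards [h5] with n hn
    simpa [Finset.sum_apply] using hn
  obtain ⟨N, hN⟩ := Filter.eventually_atTop.1 hE
  -- extended coefficient function on ℕ
  set Q : ℕ → Polynomial F := fun i => if h : i < m + 1 then qq ⟨i, h⟩ else 0 with hQ
  set T : Finset ℕ := (Finset.range (m+1)).filter (fun i => Q i ≠ 0) with hT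
  have hTne : T.Nonempty := by
    refine ⟨(i0 : ℕ), ?_⟩
    rw [hT, Finset.mem_filter]
    refine ⟨Finset.mem_range.2 i0.isLt, ?_⟩
    rw [hQ]
    simpa [i0.isLt] using hqq0
  set r : ℕ := T.max' hTne with hr
  have hrT : r ∈ T := T.max'_mem hTne
  have hrm : r < m + 1 := Finset.mem_range.1 (Finset.mem_filter.1 hrT).1
  have hQr : Q r ≠ 0 := (Finset.mem_filter.1 hrT).2
  have hQgt : ∀ i, r < i → Q i = 0 := by
    intro i hi
    by_cases him : i < m + 1
    · by_contra h0
      have : i ∈ T := Finset.mem_filter.2 ⟨Finset.mem_range.2 him, h0⟩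
      exact absurd (T.le_max' i this) (by omega)
    · rw [hQ]; simp [him]
  set v : Polynomial F := ∏ t ∈ Finset.range N, (Polynomial.X - Polynomial.C (t : F)) with hv
  have hv0 : v ≠ 0 :=
    Finset.prod_ne_zero_iff.2 fun t _ => Polynomial.X_sub_C_ne_zero _
  refine ⟨r, fun j => ((v * Q (j : ℕ)).map (F.subtype : F →+* ℂ)), ?_, ?_, ?_⟩
  · intro j k
    rw [Polynomial.coeff_map]
    exact SetLike.coe_mem _
  · simp only [Fin.val_last, ne_eq, Polynomial.map_eq_zero_iff F.subtype.injective]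
    exact mul_ne_zero hv0 hQr
  · intro n
    have hsplit : ∀ j : Fin (r+1),
        ((v * Q (j:ℕ)).map (F.subtype : F →+* ℂ)).eval (n:ℂ) * a (n + (j:ℕ))
        = (v.map (F.subtype : F →+* ℂ)).eval (n:ℂ) *
          (((Q (j:ℕ)).map (F.subtype : F →+* ℂ)).eval (n:ℂ) * a (n + (j:ℕ))) := by
      intro j
      rw [Polynomial.map_mul, Polynomial.eval_mul, mul_assoc]
    rw [Finset.sum_congr rfl fun j _ => hsplit j, ← Finset.mul_sum]
    by_cases hn : N ≤ n
    · -- the sum vanishes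
      have hsum : ∑ j : Fin (r+1),
          ((Q (j:ℕ)).map (F.subtype : F →+* ℂ)).eval (n:ℂ) * a (n + (j:ℕ)) = 0 := by
        set f : ℕ → ℂ := fun i => ((Q i).map (F.subtype : F →+* ℂ)).eval (n:ℂ) * a (n + i) with hf
        have e1 : ∑ j : Fin (r+1), ((Q (j:ℕ)).map (F.subtype : F →+* ℂ)).eval (n:ℂ) * a (n + (j:ℕ))
            = ∑ i ∈ Finset.range (r+1), f i := Fin.sum_univ_eq_sum_range f (r+1)
        have e2 : ∑ i ∈ Finset.range (r+1), f i = ∑ i ∈ Finset.range (m+1), f i := by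
          refine Finset.sum_subset (Finset.range_subset_range.2 (by omega)) ?_
          intro x hx hnx
          have hx1 : r < x := by
            simp only [Finset.mem_range] at hx hnx
            omega
          rw [hf]
          simp [hQgt x hx1]
        have e3 : ∑ i ∈ Finset.range (m+1), f i
            = ∑ i : Fin (m+1), ((qq i).map (F.subtype : F →+* ℂ)).eval (n:ℂ) * a (n + (i:ℕ)) := by
          rw [← Fin.sum_univ_eq_sum_range f (m+1)]
          refine Finset.sum_congr rfl fun i _ => ?_
          rw [hf, hQ]
          simp [i.isLt]
        rw [e1, e2, e3]
        exact hN n hn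
      rw [hsum, mul_zero]
    · -- the vanishing factor is zero
      have hvz : (v.map (F.subtype : F →+* ℂ)).eval (n:ℂ) = 0 := by
        rw [hv, Polynomial.map_prod, Polynomial.eval_prod]
        refine Finset.prod_eq_zero (Finset.mem_range.2 (by omega : n < N)) ?_
        simp
      rw [hvz, zero_mul]

end DFAux

namespace DFAux
variable (F : Subfield ℂ)
attribute [local instance] algK

lemma good_const (c : ℂ) : Good F ↑(fun _ : ℕ => c) := by
  refine ⟨{(↑(fun _ : ℕ => c) : G)}, fun k => Submodule.subset_span ?_⟩
  simp only [Finset.coe_singleton, Set.mem_singleton_iff]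
  rfl

lemma good_neg (g : G) (hg : Good F g) : Good F (-g) := by
  obtain ⟨s, hs⟩ := hg
  exact ⟨s, fun k => by rw [map_neg]; exact neg_mem (hs k)⟩

end DFAux

/-- `ξ` is a D-finite number w.r.t. a subring `R` and subfield `F` of `ℂ`. -/
def DFiniteNum (R : Subring ℂ) (F : Subfield ℂ) (ξ : ℂ) : Prop :=
  ∃ a : ℕ → ℂ, (∀ n, a n ∈ R) ∧ IsPRecursiveOver F a ∧ Tendsto a atTop (𝓝 ξ)

theorem dfiniteNum_subring (R : Subring ℂ) (F : Subfield ℂ) :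
    (DFiniteNum R F 0 ∧ DFiniteNum R F 1 ∧
      (∀ x y : ℂ, DFiniteNum R F x → DFiniteNum R F y → DFiniteNum R F (x + y)) ∧
      (∀ x : ℂ, DFiniteNum R F x → DFiniteNum R F (-x)) ∧
      (∀ x y : ℂ, DFiniteNum R F x → DFiniteNum R F y → DFiniteNum R F (x * y))) ∧
    ((∀ c ∈ F, ∀ x ∈ R, c * x ∈ R) →
      ∀ c ∈ F, ∀ x : ℂ, DFiniteNum R F x → DFiniteNum R F (c * x)) := by
  constructor
  · refine ⟨?_, ?_, ?_, ?_, ?_⟩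
    · exact ⟨fun _ => 0, fun _ => R.zero_mem,
        DFAux.rec_of_good F _ (DFAux.good_const F 0), tendsto_const_nhds⟩
    · exact ⟨fun _ => 1, fun _ => R.one_mem,
        DFAux.rec_of_good F _ (DFAux.good_const F 1), tendsto_const_nhds⟩
    · rintro x y ⟨a, haR, haP, haT⟩ ⟨b, hbR, hbP, hbT⟩
      refine ⟨fun n => a n + b n, fun n => R.add_mem (haR n) (hbR n), ?_, haT.add hbT⟩
      exact DFAux.rec_of_good F _
        (DFAux.good_add F _ _ (DFAux.good_of_rec F a haP) (DFAux.good_of_rec F b hbP))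
    · rintro x ⟨a, haR, haP, haT⟩
      refine ⟨fun n => -(a n), fun n => R.neg_mem (haR n), ?_, haT.neg⟩
      exact DFAux.rec_of_good F _ (DFAux.good_neg F _ (DFAux.good_of_rec F a haP))
    · rintro x y ⟨a, haR, haP, haT⟩ ⟨b, hbR, hbP, hbT⟩
      refine ⟨fun n => a n * b n, fun n => R.mul_mem (haR n) (hbR n), ?_, haT.mul hbT⟩
      exact DFAux.rec_of_good F _
        (DFAux.good_mul F _ _ (DFAux.good_of_rec F a haP) (DFAux.good_of_rec F b hbP))
  · rintro hcl c hc x ⟨a, haR, haP, haT⟩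
    refine ⟨fun n => c * a n, fun n => hcl c hc (a n) (haR n), ?_, haT.const_mul c⟩
    exact DFAux.rec_of_good F _
      (DFAux.good_mul F _ _ (DFAux.good_const F c) (DFAux.good_of_rec F a haP))

end
end

section
/- If R ⊆ F (R a subring of ℂ, F a subfield), then D_{R,F} = D_{R,Frac(R)}, where Frac(R) is the fraction field of R inside ℂ. -/
set_option synthInstance.maxHeartbeats 1000000
set_option maxHeartbeats 1000000

open Filter Topology Polynomial

lemma exists_K_solution (K : Subfield ℂ) {ι : Type*} [Fintype ι]
    (M : ℕ → ι → K) (x : ι → ℂ) (hx : x ≠ 0)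
    (hrec : ∀ n : ℕ, ∑ i, (M n i : ℂ) * x i = 0) :
    ∃ y : ι → K, y ≠ 0 ∧ ∀ n : ℕ, ∑ i, (M n i : ℂ) * (y i : ℂ) = 0 := by
  classical
  set φ : ℕ → (ι → K) →ₗ[K] K := fun n => ∑ i, M n i • (LinearMap.proj i) with hφ
  have hφapp : ∀ n y, φ n y = ∑ i, M n i * y i := by
    intro n y
    simp [hφ, LinearMap.sum_apply]
  by_cases hbot : (⨅ n, LinearMap.ker (φ n)) = ⊥
  · exfalso
    apply hx
    funext i
    have hproj : (LinearMap.proj i : (ι → K) →ₗ[K] K) ∈ Submodule.span K (Set.range φ) :=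
      FiniteDimensional.mem_span_of_iInf_ker_le_ker (by rw [hbot]; exact bot_le)
    obtain ⟨c, hc⟩ := (Finsupp.mem_span_range_iff_exists_finsupp).1 hproj
    have key1 : ∀ m : ι, (∑ n ∈ c.support, c n * M n m) = (Pi.single m 1 : ι → K) i := by
      intro m
      have := LinearMap.congr_fun hc ((Pi.single m 1 : ι → K))
      simp only [Finsupp.sum, LinearMap.coe_sum, Finset.sum_apply, LinearMap.smul_apply,
        LinearMap.proj_apply] at this
      rw [← this]
      refine Finset.sum_congr rfl fun n _ => ?_
      rw [hφapp]
      simp [Pi.single_apply, mul_ite, Finset.mul_sum]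
    have key2 : x i = ∑ m : ι, (((Pi.single m 1 : ι → K) i : ℂ)) * x m := by
      simp [Pi.single_apply, apply_ite, ite_mul]
    rw [key2]
    have key3 : ∀ m : ι, (((Pi.single m 1 : ι → K) i : ℂ))
        = ∑ n ∈ c.support, (c n : ℂ) * (M n m : ℂ) := by
      intro m
      rw [← key1 m]
      push_cast
      ring
    calc ∑ m : ι, (((Pi.single m 1 : ι → K) i : ℂ)) * x m
        = ∑ m : ι, (∑ n ∈ c.support, (c n : ℂ) * (M n m : ℂ)) * x m := by
          exact Finset.sum_congr rfl fun m _ => by rw [key3]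
      _ = ∑ m : ι, ∑ n ∈ c.support, ((c n : ℂ) * (M n m : ℂ)) * x m := by
          exact Finset.sum_congr rfl fun m _ => Finset.sum_mul _ _ _
      _ = ∑ n ∈ c.support, ∑ m : ι, ((c n : ℂ) * (M n m : ℂ)) * x m := Finset.sum_comm
      _ = ∑ n ∈ c.support, (c n : ℂ) * (∑ m : ι, (M n m : ℂ) * x m) := by
          refine Finset.sum_congr rfl fun n _ => ?_
          rw [Finset.mul_sum]
          exact Finset.sum_congr rfl fun m _ => by ring
      _ = 0 := by simp [hrec]
  · obtain ⟨y, hy, hy0⟩ := Submodule.ne_bot_iff _ |>.1 hbot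
    refine ⟨y, hy0, fun n => ?_⟩
    have h1 : (φ n) y = 0 := by
      have := Submodule.mem_iInf (fun n => LinearMap.ker (φ n)) |>.1 hy n
      exact LinearMap.mem_ker.1 this
    rw [hφapp] at h1
    have := congrArg (K.subtype) h1
    rw [map_sum K.subtype] at this
    simpa [Subfield.coe_subtype] using this

lemma trim (K : Subfield ℂ) (a : ℕ → ℂ) (r : ℕ) (q : Fin (r+1) → Polynomial ℂ)
    (hmem : ∀ j k, (q j).coeff k ∈ K) (hne : ∃ j, q j ≠ 0)
    (hrec : ∀ n : ℕ, ∑ j : Fin (r+1), (q j).eval (n:ℂ) * a (n + (j:ℕ)) = 0) :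
    IsPRecursiveOver K a := by
  classical
  obtain ⟨j0, hj0⟩ := hne
  let T : Finset (Fin (r+1)) := Finset.univ.filter (fun j => q j ≠ 0)
  have hT : T.Nonempty := ⟨j0, by simp [T, hj0]⟩
  set s := T.max' hT with hs
  have hmax : ∀ j, q j ≠ 0 → j ≤ s := fun j hj => Finset.le_max' T j (by simp [T, hj])
  have hsr : (s:ℕ) + 1 ≤ r + 1 := s.isLt
  refine ⟨(s:ℕ), fun j => q (Fin.castLE hsr j), fun j k => hmem _ _, ?_, ?_⟩
  · have h1 : Fin.castLE hsr (Fin.last (s:ℕ)) = s := by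
      apply Fin.ext; simp
    show q (Fin.castLE hsr (Fin.last (s:ℕ))) ≠ 0
    rw [h1]
    exact (Finset.mem_filter.mp (T.max'_mem hT)).2
  · intro n
    have hzero : ∀ j : Fin (r+1), (s:ℕ) < (j:ℕ) → q j = 0 := by
      intro j hj
      by_contra h
      have := hmax j h
      rw [Fin.le_def] at this
      omega
    set g : ℕ → ℂ := fun m =>
      if h : m < r+1 then (q ⟨m, h⟩).eval (n:ℂ) * a (n+m) else 0 with hg
    have e1 : ∑ j : Fin ((s:ℕ)+1), (q (Fin.castLE hsr j)).eval (n:ℂ) * a (n + (j:ℕ))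
        = ∑ m ∈ Finset.range ((s:ℕ)+1), g m := by
      rw [Finset.sum_range fun m => g m]
      refine Finset.sum_congr rfl fun j _ => ?_
      rw [hg]
      simp only []
      rw [dif_pos (lt_of_lt_of_le j.isLt hsr)]
      rfl
    have e2 : ∑ m ∈ Finset.range (r+1), g m
        = ∑ j : Fin (r+1), (q j).eval (n:ℂ) * a (n + (j:ℕ)) := by
      rw [Finset.sum_range fun m => g m]
      refine Finset.sum_congr rfl fun j _ => ?_
      rw [hg]
      simp only []
      rw [dif_pos j.isLt]
    rw [e1, Finset.sum_subset (Finset.range_subset_range.mpr hsr), e2, hrec n]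
    intro m hm hm2
    simp only [Finset.mem_range] at hm hm2
    rw [hg]
    simp only []
    rw [dif_pos hm, hzero ⟨m, hm⟩ (by simpa using hm2)]
    simp

lemma transfer (K : Subfield ℂ) (a : ℕ → ℂ) (ha : ∀ n, a n ∈ K)
    (r : ℕ) (p : Fin (r+1) → Polynomial ℂ) (hp : ∃ j, p j ≠ 0)
    (hrec : ∀ n : ℕ, ∑ j : Fin (r+1), (p j).eval (n:ℂ) * a (n + (j:ℕ)) = 0) :
    IsPRecursiveOver K a := by
  classical
  obtain ⟨j0, hj0⟩ := hp
  set d := Finset.univ.sup (fun j : Fin (r+1) => (p j).natDegree) with hd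
  have hdeg : ∀ j, (p j).natDegree < d + 1 := by
    intro j
    have : (p j).natDegree ≤ d := by
      rw [hd]
      exact Finset.le_sup (f := fun j : Fin (r+1) => (p j).natDegree) (Finset.mem_univ j)
    omega
  set M : ℕ → (Fin (r+1) × Fin (d+1)) → K := fun n i =>
    ⟨(n:ℂ)^(i.2:ℕ) * a (n + (i.1:ℕ)),
      K.mul_mem (K.pow_mem (natCast_mem K n) _) (ha _)⟩ with hM
  set x : (Fin (r+1) × Fin (d+1)) → ℂ := fun i => (p i.1).coeff i.2 with hx
  have hMc : ∀ n i, (M n i : ℂ) = (n:ℂ)^(i.2:ℕ) * a (n + (i.1:ℕ)) := fun n i => rfl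
  have hsum : ∀ (z : (Fin (r+1) × Fin (d+1)) → ℂ) (n : ℕ),
      ∑ i, (M n i : ℂ) * z i
        = ∑ j : Fin (r+1), (∑ k : Fin (d+1), z (j,k) * (n:ℂ)^(k:ℕ)) * a (n + (j:ℕ)) := by
    intro z n
    rw [Fintype.sum_prod_type]
    refine Finset.sum_congr rfl fun j _ => ?_
    rw [Finset.sum_mul]
    refine Finset.sum_congr rfl fun k _ => ?_
    rw [hMc]
    ring
  have hxne : x ≠ 0 := by
    intro h0
    apply hj0
    rw [← leadingCoeff_eq_zero]
    have h2 : x (j0, ⟨(p j0).natDegree, hdeg j0⟩) = 0 := by rw [h0]; rfl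
    exact h2
  have hxrec : ∀ n : ℕ, ∑ i, (M n i : ℂ) * x i = 0 := by
    intro n
    rw [hsum]
    rw [← hrec n]
    refine Finset.sum_congr rfl fun j _ => ?_
    congr 1
    rw [eval_eq_sum_range' (hdeg j), ← Fin.sum_univ_eq_sum_range
      (fun k => (p j).coeff k * (n:ℂ)^k) (d+1)]
  obtain ⟨y, hy0, hy⟩ := exists_K_solution K M x hxne hxrec
  set q : Fin (r+1) → Polynomial ℂ :=
    fun j => ∑ k : Fin (d+1), C ((y (j,k) : ℂ)) * X^(k:ℕ) with hq
  have hqcoeff : ∀ j (k : Fin (d+1)), (q j).coeff (k:ℕ) = (y (j,k) : ℂ) := by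
    intro j k
    rw [hq]
    simp only [finset_sum_coeff, coeff_C_mul, coeff_X_pow]
    rw [Finset.sum_eq_single k]
    · simp
    · intro b _ hb
      rw [if_neg (fun h => hb (Fin.ext h.symm)), mul_zero]
    · simp
  refine trim K a r q ?_ ?_ ?_
  · intro j m
    rw [hq]
    simp only [finset_sum_coeff, coeff_C_mul, coeff_X_pow]
    refine Subfield.sum_mem K fun k _ => ?_
    refine K.mul_mem (y (j,k)).2 ?_
    split <;> simp [K.one_mem, K.zero_mem]
  · obtain ⟨i, hi⟩ := Function.ne_iff.mp hy0
    refine ⟨i.1, fun h => hi ?_⟩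
    have := hqcoeff i.1 i.2
    rw [h] at this
    simp only [coeff_zero] at this
    exact Subtype.ext this.symm
  · intro n
    rw [← hy n, hsum]
    refine Finset.sum_congr rfl fun j _ => ?_
    congr 1
    rw [hq]
    simp [eval_finset_sum]

theorem dfiniteNum_fraction_field (R : Subring ℂ) (F : Subfield ℂ)
    (hRF : (R : Set ℂ) ⊆ (F : Set ℂ)) (K : Subfield ℂ)
    (hK : ∀ x : ℂ, x ∈ K ↔ ∃ p ∈ R, ∃ q ∈ R, q ≠ 0 ∧ x = p / q) :
    ∀ ξ : ℂ, DFiniteNum R F ξ ↔ DFiniteNum R K ξ := by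
  have hRK : (R : Set ℂ) ⊆ (K : Set ℂ) := fun x hx =>
    (hK x).mpr ⟨x, hx, 1, R.one_mem, one_ne_zero, (div_one x).symm⟩
  have hKF : (K : Set ℂ) ⊆ (F : Set ℂ) := by
    intro x hx
    obtain ⟨u, hu, v, hv, hv0, rfl⟩ := (hK x).mp hx
    exact F.div_mem (hRF hu) (hRF hv)
  intro ξ
  constructor
  · rintro ⟨a, ha, ⟨r, p, _, hl, hrec⟩, hten⟩
    exact ⟨a, ha, transfer K a (fun n => hRK (ha n)) r p ⟨_, hl⟩ hrec, hten⟩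
  · rintro ⟨a, ha, ⟨r, p, hc, hl, hrec⟩, hten⟩
    exact ⟨a, ha, ⟨r, p, fun j k => hKF (hc j k), hl, hrec⟩, hten⟩
end
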